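/- arXiv:1407.7923 — 11 statements merged into one kernel-verified Lean document; each statement's English description precedes it below -/
import Mathlib

section
/- Let F be a finite field and d a positive integer with gcd(d, |F*|) = 1. Then for every v ∈ F, v^d + (1-v)^d ≠ 0. -/
theorem stmt_1 (F : Type*) [Field F] [Fintype F] (d : ℕ) (hd : 0 < d)
    (hcop : Nat.Coprime d (Fintype.card F - 1)) :
    ∀ v : F, v ^ d + (1 - v) ^ d ≠ 0 := by
  classical
  have hcard : (Nat.card Fˣ).Coprime d := by
    rw [Nat.card_eq_fintype_card, Fintype.card_units]
    exact hcop.symm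
  have key : ∀ x y : Fˣ, x ^ d = y ^ d → x = y := fun x y hxy =>
    (powCoprime hcard).injective hxy
  have neg1d : ((-1 : F)) ^ d = -1 := by
    rcases eq_or_ne (-1 : F) 1 with h1 | h1
    · rw [h1, one_pow]
    · have h2 : 2 ∣ Fintype.card F - 1 := by
        have ho : orderOf (-1 : F) = 2 :=
          orderOf_eq_prime (by norm_num) h1
        have ho2 : orderOf (-1 : Fˣ) = 2 := by
          rw [← orderOf_units]
          simpa using ho
        rw [← Fintype.card_units, ← ho2]
        exact orderOf_dvd_card
      have hodd : Odd d := by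
        rcases Nat.even_or_odd d with he | ho
        · exfalso
          have : 2 ∣ Nat.gcd d (Fintype.card F - 1) :=
            Nat.dvd_gcd he.two_dvd h2
          rw [hcop] at this
          omega
        · exact ho
      exact hodd.neg_one_pow
  intro v h
  by_cases hv : v = 0
  · simp [hv, zero_pow hd.ne'] at h
  by_cases hv1 : v = 1
  · simp [hv1, zero_pow hd.ne'] at h
  have h1v : (1 : F) - v ≠ 0 := fun hh => hv1 (by linear_combination -hh)
  have heq : v ^ d = (-(1 - v)) ^ d := by
    rw [neg_pow, neg1d]
    linear_combination h
  have hne : -(1 - v) ≠ 0 := neg_ne_zero.mpr h1v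
  have := key (Units.mk0 v hv) (Units.mk0 _ hne) (by
    ext
    push_cast [Units.val_pow_eq_pow_val]
    simpa using heq)
  have hv' : v = -(1 - v) := by
    have := congrArg Units.val this
    simpa using this
  have : (0 : F) = -1 := by linear_combination hv'
  simp at this
end

section
/- Let F be a finite field and d a positive integer with gcd(d, |F*|) = 1. Then Σ_{u∈F*} W_{F,d}(u)² = |F|², where W_{F,d}(u) = Σ_{x∈F} ψ(x^d + ux) and ψ is the canonical additive character of F. -/
open Complex

/-- The canonical additive character of a finite field `F` of characteristic `p`:
`ψ(x) = exp(2πi · Tr_{F/F_p}(x) / p)`. -/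
noncomputable def psi (p : ℕ) [Fact p.Prime] (F : Type*) [Field F] [Fintype F]
    [Algebra (ZMod p) F] (x : F) : ℂ :=
  Complex.exp (2 * Real.pi * Complex.I * ((Algebra.trace (ZMod p) F x).val : ℂ) / (p : ℂ))

/-- The Weil sum `W_{F,d}(u) = Σ_{x ∈ F} ψ(x^d + u x)`. -/
noncomputable def weilSum (p : ℕ) [Fact p.Prime] (F : Type*) [Field F] [Fintype F]
    [Algebra (ZMod p) F] (d : ℕ) (u : F) : ℂ :=
  ∑ x : F, psi p F (x ^ d + u * x)

noncomputable def Psi (p : ℕ) [Fact p.Prime] (F : Type*) [Field F] [Fintype F]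
    [Algebra (ZMod p) F] : AddChar F ℂ :=
  haveI : NeZero p := ⟨(Fact.out : p.Prime).ne_zero⟩
  (ZMod.stdAddChar (N := p)).compAddMonoidHom
    (Algebra.trace (ZMod p) F).toAddMonoidHom

lemma Psi_apply (p : ℕ) [Fact p.Prime] (F : Type*) [Field F] [Fintype F]
    [Algebra (ZMod p) F] (x : F) : Psi p F x = psi p F x := by
  haveI : NeZero p := ⟨(Fact.out : p.Prime).ne_zero⟩
  simp only [Psi, AddChar.compAddMonoidHom_apply, LinearMap.toAddMonoidHom_coe,
    ZMod.stdAddChar_apply, ZMod.toCircle_apply, psi]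

lemma exists_trace_ne (p : ℕ) [Fact p.Prime] (F : Type*) [Field F] [Fintype F]
    [Algebra (ZMod p) F] : ∃ b : F, Algebra.trace (ZMod p) F b ≠ 0 := by
  have hc : CharP F p := charP_of_injective_algebraMap (algebraMap (ZMod p) F).injective p
  have h : p = ringChar F := (ringChar.eq F p).symm
  subst h
  obtain ⟨b, hb⟩ := FiniteField.trace_to_zmod_nondegenerate F (one_ne_zero (α := F))
  rw [one_mul] at hb
  exact ⟨b, hb⟩

lemma Psi_ne_one (p : ℕ) [Fact p.Prime] (F : Type*) [Field F] [Fintype F]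
    [Algebra (ZMod p) F] : Psi p F ≠ 1 := by
  haveI : NeZero p := ⟨(Fact.out : p.Prime).ne_zero⟩
  obtain ⟨b, hb⟩ := exists_trace_ne p F
  rw [AddChar.ne_one_iff]
  refine ⟨b, fun hcon => hb ?_⟩
  apply ZMod.injective_stdAddChar
  rw [show ZMod.stdAddChar (N := p) 0 = 1 by simp]
  exact hcon

open scoped Classical in
lemma sum_Psi_mul (p : ℕ) [Fact p.Prime] (F : Type*) [Field F] [Fintype F]
    [Algebra (ZMod p) F] (b : F) :
    ∑ x : F, Psi p F (x * b) = if b = 0 then (Fintype.card F : ℂ) else 0 := by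
  simpa using AddChar.sum_mulShift b (AddChar.IsPrimitive.of_ne_one (Psi_ne_one p F))

lemma neg_pow_key (p : ℕ) [Fact p.Prime] (F : Type*) [Field F] [Fintype F]
    [Algebra (ZMod p) F] (d : ℕ) (hcop : Nat.Coprime d (Fintype.card F - 1)) (x : F) :
    x ^ d + (-x) ^ d = 0 := by
  haveI : CharP F p := charP_of_injective_algebraMap (algebraMap (ZMod p) F).injective p
  by_cases hp2 : p = 2
  · have hall : ∀ a : F, a + a = 0 := fun a => by
      rw [← two_mul, show ((2 : F) = 0) from by
        subst hp2; exact_mod_cast CharP.cast_eq_zero F 2, zero_mul]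
    rw [show (-x) = x from neg_eq_of_add_eq_zero_right (hall x)]
    exact hall _
  · have hodd : Odd d := by
      have hpodd : Odd p := (Fact.out : p.Prime).odd_of_ne_two hp2
      obtain ⟨n, hn⟩ := FiniteField.card F p
      have hq : Odd (Fintype.card F) := hn.2 ▸ hpodd.pow
      rcases Nat.even_or_odd d with he | ho
      · exfalso
        have h2 : (2 : ℕ) ∣ Nat.gcd d (Fintype.card F - 1) :=
          Nat.dvd_gcd he.two_dvd (Nat.Odd.sub_odd hq odd_one).two_dvd
        rw [hcop] at h2
        omega
      · exact ho
    rw [hodd.neg_pow]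
    exact add_neg_cancel _

lemma pow_d_bijective (F : Type*) [Field F] [Fintype F]
    (d : ℕ) (hd : 0 < d) (hcop : Nat.Coprime d (Fintype.card F - 1)) :
    Function.Bijective (fun x : F => x ^ d) := by
  classical
  rw [← Finite.injective_iff_bijective]
  intro a b h
  simp only at h
  rcases eq_or_ne a 0 with rfl | ha
  · rw [zero_pow hd.ne'] at h
    exact ((pow_eq_zero_iff hd.ne').mp h.symm).symm
  rcases eq_or_ne b 0 with rfl | hb
  · rw [zero_pow hd.ne'] at h
    exact absurd ((pow_eq_zero_iff hd.ne').mp h) ha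
  have hcard : (Nat.card Fˣ).Coprime d := by
    rw [Nat.card_eq_fintype_card, Fintype.card_units]
    exact hcop.symm
  have := (powCoprime hcard).injective (a₁ := Units.mk0 a ha) (a₂ := Units.mk0 b hb) ?_
  · simpa [Units.ext_iff] using this
  · simp only [powCoprime_apply]
    ext
    simpa using h

open scoped Classical in
theorem stmt_4 (p : ℕ) [Fact p.Prime] (F : Type*) [Field F] [Fintype F]
    [Algebra (ZMod p) F] (d : ℕ) (hd : 0 < d)
    (hcop : Nat.Coprime d (Fintype.card F - 1)) :
    ∑ u : Fˣ, (weilSum p F d u) ^ 2 = (Fintype.card F : ℂ) ^ 2 := by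
  set q := Fintype.card F with hq
  set Ψ := Psi p F with hΨ
  have hW : ∀ u : F, weilSum p F d u = ∑ x : F, Ψ (x ^ d + u * x) := by
    intro u
    simp [weilSum, hΨ, Psi_apply]
  -- total sum over F
  have htot : ∑ u : F, (weilSum p F d u) ^ 2 = (q : ℂ) ^ 2 := by
    calc ∑ u : F, (weilSum p F d u) ^ 2
        = ∑ u : F, ∑ x : F, ∑ y : F, Ψ (x ^ d + y ^ d) * Ψ (u * (x + y)) := by
          refine Finset.sum_congr rfl fun u _ => ?_
          rw [hW, sq, Finset.sum_mul_sum]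
          refine Finset.sum_congr rfl fun x _ => Finset.sum_congr rfl fun y _ => ?_
          rw [← AddChar.map_add_eq_mul, ← AddChar.map_add_eq_mul]
          congr 1
          ring
      _ = ∑ x : F, ∑ y : F, ∑ u : F, Ψ (x ^ d + y ^ d) * Ψ (u * (x + y)) := by
          rw [Finset.sum_comm]
          exact Finset.sum_congr rfl fun x _ => Finset.sum_comm
      _ = ∑ x : F, ∑ y : F, Ψ (x ^ d + y ^ d) * (if x + y = 0 then (q : ℂ) else 0) := by
          refine Finset.sum_congr rfl fun x _ => Finset.sum_congr rfl fun y _ => ?_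
          rw [← Finset.mul_sum, sum_Psi_mul]
      _ = ∑ x : F, Ψ (x ^ d + (-x) ^ d) * (q : ℂ) := by
          refine Finset.sum_congr rfl fun x _ => ?_
          rw [Finset.sum_eq_single (-x)]
          · simp
          · intro y _ hy
            rw [if_neg, mul_zero]
            intro h0
            exact hy (eq_neg_of_add_eq_zero_right h0)
          · intro h
            exact absurd (Finset.mem_univ _) h
      _ = ∑ _x : F, (q : ℂ) := by
          refine Finset.sum_congr rfl fun x _ => ?_
          rw [neg_pow_key p F d hcop, AddChar.map_zero_eq_one, one_mul]
      _ = (q : ℂ) ^ 2 := by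
          rw [Finset.sum_const, Finset.card_univ, ← hq, nsmul_eq_mul, sq]
  -- Weil sum at 0 vanishes
  have hW0 : weilSum p F d 0 = 0 := by
    rw [hW]
    have h1 : ∑ x : F, Ψ (x ^ d + 0 * x) = ∑ x : F, Ψ (x ^ d) := by
      refine Finset.sum_congr rfl fun x _ => ?_
      rw [zero_mul, add_zero]
    rw [h1, Fintype.sum_bijective _ (pow_d_bijective F d hd hcop) _ (fun x => Ψ x)
      (fun x => rfl)]
    exact AddChar.sum_eq_zero_of_ne_one (Psi_ne_one p F)
  -- split off the zero term
  have hsplit : ∑ u : Fˣ, (weilSum p F d (u : F)) ^ 2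
      = ∑ a ∈ Finset.univ.erase (0 : F), (weilSum p F d a) ^ 2 := by
    refine Finset.sum_nbij' (fun u : Fˣ => (u : F))
      (fun a : F => if h : a = 0 then 1 else Units.mk0 a h) ?_ ?_ ?_ ?_ ?_
    · intro u _
      simp [Units.ne_zero u]
    · intro a ha
      exact Finset.mem_univ _
    · intro u _
      simp [Units.ne_zero u]
    · intro a ha
      rw [Finset.mem_erase] at ha
      simp [ha.1]
    · intro u _
      rfl
  have htotal := Finset.add_sum_erase Finset.univ (fun a => (weilSum p F d a) ^ 2)
    (Finset.mem_univ (0 : F))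
  rw [hsplit]
  rw [htot, hW0] at htotal
  simpa using htotal
end

section
/- Let F be a finite field of odd characteristic and d a positive integer with gcd(d, |F*|) = 1. Then the map (x,y) ↦ (x/(x+y), (x^d + y^d)^{1/d}) is a bijection from {(x,y) ∈ F² : x + y ≠ 0} to F × F*, where (·)^{1/d} denotes the inverse of the d-th power permutation of F. -/
theorem stmt_6 (F : Type*) [Field F] [Fintype F] (p : ℕ) [CharP F p] (hp : Odd p)
    (d : ℕ) (hd : 0 < d) (hcop : Nat.Coprime d (Fintype.card F - 1))
    (g : F → F) (hg : ∀ z : F, (g z) ^ d = z) :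
    Set.BijOn (fun xy : F × F => (xy.1 / (xy.1 + xy.2), g (xy.1 ^ d + xy.2 ^ d)))
      {xy : F × F | xy.1 + xy.2 ≠ 0} (Set.univ ×ˢ {w : F | w ≠ 0}) := by
  have hinj : Function.Injective (fun a : F => a ^ d) :=
    Finite.injective_iff_surjective.mpr (fun z => ⟨g z, hg z⟩)
  have hgpow : ∀ a : F, g (a ^ d) = a := fun a => hinj (hg (a ^ d))
  have hg0 : ∀ z : F, g z = 0 → z = 0 := by
    intro z h
    have := hg z
    rw [h] at this
    simpa [hd.ne'] using this.symm
  -- d is odd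
  have hcardodd : Odd (Fintype.card F) := by
    rcases FiniteField.card F p with ⟨n, hp', hn⟩
    rw [hn]
    exact hp.pow
  have hdodd : Odd d := by
    rcases Nat.even_or_odd d with he | ho
    · exfalso
      have h2 : 2 ∣ Fintype.card F - 1 := by
        rcases hcardodd with ⟨k, hk⟩
        exact ⟨k, by omega⟩
      have := Nat.eq_one_of_dvd_coprimes hcop (even_iff_two_dvd.mp he) h2
      omega
    · exact ho
  have key : ∀ a b : F, a ^ d + b ^ d = 0 → a + b = 0 := by
    intro a b h
    have h1 : a ^ d = (-b) ^ d := by rw [hdodd.neg_pow]; exact eq_neg_of_add_eq_zero_left h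
    have := hinj h1
    rw [this]; ring
  have keyc : ∀ t : F, t ^ d + (1 - t) ^ d ≠ 0 := by
    intro t h
    have := key t (1 - t) h
    simp at this
  constructor
  · -- MapsTo
    rintro ⟨x, y⟩ hxy
    refine ⟨Set.mem_univ _, ?_⟩
    intro h0
    exact hxy (key x y (by simpa [hd.ne'] using hg0 _ h0))
  constructor
  · -- InjOn
    rintro ⟨x, y⟩ hxy ⟨x', y'⟩ hxy' h
    simp only [Prod.mk.injEq] at h
    obtain ⟨ht, hw⟩ := h
    have hs : x + y ≠ 0 := hxy
    have hs' : x' + y' ≠ 0 := hxy'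
    have hsum : x ^ d + y ^ d = x' ^ d + y' ^ d := by
      have := congrArg (fun z => z ^ d) hw
      simpa [hg] using this
    set t := x / (x + y) with htdef
    have hx : x = t * (x + y) := by rw [htdef]; field_simp
    have hx' : x' = t * (x' + y') := by
      rw [ht]; field_simp
    have hy : y = (1 - t) * (x + y) := by
      have h2 : (1 - t) * (x + y) = (x + y) - t * (x + y) := by ring
      rw [h2, ← hx]; ring
    have hy' : y' = (1 - t) * (x' + y') := by
      have h2 : (1 - t) * (x' + y') = (x' + y') - t * (x' + y') := by ring
      rw [h2, ← hx']; ring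
    have hfac : (t ^ d + (1 - t) ^ d) * (x + y) ^ d = (t ^ d + (1 - t) ^ d) * (x' + y') ^ d := by
      calc (t ^ d + (1 - t) ^ d) * (x + y) ^ d
            = (t * (x + y)) ^ d + ((1 - t) * (x + y)) ^ d := by
            rw [mul_pow, mul_pow]; ring
        _ = x ^ d + y ^ d := by rw [← hx, ← hy]
        _ = x' ^ d + y' ^ d := hsum
        _ = (t * (x' + y')) ^ d + ((1 - t) * (x' + y')) ^ d := by rw [← hx', ← hy']
        _ = (t ^ d + (1 - t) ^ d) * (x' + y') ^ d := by rw [mul_pow, mul_pow]; ring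
    have hspow : (x + y) ^ d = (x' + y') ^ d := mul_left_cancel₀ (keyc t) hfac
    have hseq : x + y = x' + y' := hinj hspow
    simp only [Prod.mk.injEq]
    constructor
    · rw [hx, hx', hseq]
    · rw [hy, hy', hseq]
  · -- SurjOn
    rintro ⟨t, w⟩ ⟨-, hw⟩
    simp only [Set.mem_setOf_eq] at hw
    set c := t ^ d + (1 - t) ^ d with hc
    have hcne : c ≠ 0 := keyc t
    set s := g (w ^ d / c) with hsdef
    have hsd : s ^ d = w ^ d / c := hg _
    have hsne : s ≠ 0 := by
      intro h0
      apply hw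
      have : w ^ d / c = 0 := by rw [← hsd, h0, zero_pow hd.ne']
      have hwd : w ^ d = 0 := by
        rwa [div_eq_zero_iff, or_iff_left hcne] at this
      exact pow_eq_zero_iff hd.ne' |>.mp hwd
    refine ⟨(t * s, (1 - t) * s), ?_, ?_⟩
    · show t * s + (1 - t) * s ≠ 0
      intro h
      apply hsne
      have : (t + (1 - t)) * s = 0 := by rw [← h]; ring
      simpa using this
    · simp only [Prod.mk.injEq]
      constructor
      · have : t * s + (1 - t) * s = s := by ring
        rw [this]
        field_simp
      · have : (t * s) ^ d + ((1 - t) * s) ^ d = c * s ^ d := by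
          rw [mul_pow, mul_pow, hc]; ring
        rw [this, hsd, mul_div_cancel₀ _ hcne, hgpow]
end

section
/- Let F be a finite field with |F| ≡ 0 (mod 3), and d a positive integer with gcd(d, |F*|) = 1. Then the number of v ∈ F satisfying v^d + (1-v)^d = 1 is congruent to 3 modulo 6. -/
open Function

lemma aux_dvd {α : Type*} [DecidableEq α] (p : ℕ) [hp : Fact p.Prime] (s : Finset α) (f : α → α)
    (hmem : ∀ a ∈ s, f a ∈ s) (hiter : ∀ a ∈ s, f^[p] a = a) (hne : ∀ a ∈ s, f a ≠ a) :
    p ∣ s.card := by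
  have hp1 : 1 < p := hp.out.one_lt
  let g : s → s := fun a => ⟨f a, hmem a a.2⟩
  have hgv : ∀ (n : ℕ) (a : s), (g^[n] a : α) = f^[n] (a : α) := by
    intro n
    induction n with
    | zero => intro a; simp
    | succ n ih => intro a; rw [iterate_succ_apply, iterate_succ_apply, ih]
  have hg : ∀ a : s, g^[p] a = a := by
    intro a; ext; rw [hgv]; exact hiter a a.2
  have hli : Function.LeftInverse (g^[p-1]) g := by
    intro a
    have : g^[p-1] (g a) = g^[(p-1)+1] a := (iterate_succ_apply g (p-1) a).symm
    rw [this, Nat.sub_add_cancel (by omega)]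
    exact hg a
  have hri : Function.RightInverse (g^[p-1]) g := by
    intro a
    have : g (g^[p-1] a) = g^[(p-1)+1] a := (iterate_succ_apply' g (p-1) a).symm
    rw [this, Nat.sub_add_cancel (by omega)]
    exact hg a
  let e : Equiv.Perm s := ⟨g, g^[p-1], hli, hri⟩
  have hep : e ^ p = 1 := by
    ext a
    rw [Equiv.Perm.coe_pow]
    exact congrArg Subtype.val (hg a)
  have hpowmod : ∀ n : ℕ, e ^ n = e ^ (n % p) := by
    intro n
    conv_lhs => rw [← Nat.div_add_mod n p]
    rw [pow_add, pow_mul, hep, one_pow, one_mul]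
  letI : MulAction (Multiplicative (ZMod p)) s :=
    { smul := fun m a => (e ^ ((Multiplicative.toAdd m).val)) a
      one_smul := by
        intro a
        show (e ^ ((0 : ZMod p)).val) a = a
        simp
      mul_smul := by
        intro x y a
        show (e ^ ((Multiplicative.toAdd x + Multiplicative.toAdd y)).val) a
          = (e ^ (Multiplicative.toAdd x).val) ((e ^ (Multiplicative.toAdd y).val) a)
        rw [← Equiv.Perm.mul_apply, ← pow_add, ZMod.val_add, ← hpowmod] }
  have hP : IsPGroup p (Multiplicative (ZMod p)) := by
    apply IsPGroup.of_card (n := 1)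
    rw [pow_one, Nat.card_congr Multiplicative.toAdd, Nat.card_zmod]
  have hmod := hP.card_modEq_card_fixedPoints (α := s)
  have hfix : MulAction.fixedPoints (Multiplicative (ZMod p)) s = ∅ := by
    ext a
    simp only [MulAction.mem_fixedPoints, Set.mem_empty_iff_false, iff_false, not_forall]
    refine ⟨Multiplicative.ofAdd (1 : ZMod p), fun h => hne a a.2 ?_⟩
    have h1 : (e ^ ((1 : ZMod p)).val) a = a := h
    rw [ZMod.val_one _ ] at h1
    · exact congrArg Subtype.val h1
  rw [hfix] at hmod
  have : Nat.card s = s.card := Nat.card_eq_finsetCard s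
  rw [this] at hmod
  simpa using (Nat.modEq_zero_iff_dvd.mp (by simpa using hmod))

theorem stmt_7 (F : Type*) [Field F] [Fintype F] (hF : Fintype.card F % 3 = 0)
    (d : ℕ) (hd : 0 < d) (hcop : Nat.Coprime d (Fintype.card F - 1)) :
    {v : F | v ^ d + (1 - v) ^ d = 1}.ncard % 6 = 3 := by
  classical
  -- characteristic 3
  haveI : CharP F (ringChar F) := ringChar.charP F
  obtain ⟨n, hp, hc⟩ := FiniteField.card F (ringChar F)
  have h3dvd : 3 ∣ Fintype.card F := Nat.dvd_of_mod_eq_zero hF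
  have hchar : ringChar F = 3 := by
    have : 3 ∣ ringChar F := Nat.Prime.dvd_of_dvd_pow (p := 3) (by norm_num) (hc ▸ h3dvd)
    exact ((Nat.prime_dvd_prime_iff_eq (by norm_num) hp).mp this).symm
  haveI : CharP F 3 := hchar ▸ ringChar.charP F
  have h3 : (3 : F) = 0 := by exact_mod_cast CharP.cast_eq_zero F 3
  have hne1 : (-1 : F) ≠ 1 := by
    intro h
    have : (1 : F) = 0 := by linear_combination h + h3
    exact one_ne_zero this
  have hne0 : (-1 : F) ≠ 0 := by
    intro h; exact one_ne_zero (by linear_combination -h)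
  -- d is odd
  have hcodd : Odd (Fintype.card F) := by
    rw [hc, hchar]; exact Odd.pow (by decide)
  have hodd : Odd d := by
    rcases Nat.even_or_odd d with he | ho
    · exfalso
      have h2d : 2 ∣ d := he.two_dvd
      have h2c : 2 ∣ Fintype.card F - 1 := by
        obtain ⟨k, hk⟩ := hcodd
        omega
      have := Nat.dvd_gcd h2d h2c
      rw [hcop] at this
      omega
    · exact ho
  -- finset setup
  set S : Finset F := Finset.univ.filter (fun v => v ^ d + (1 - v) ^ d = 1) with hS
  have hset : {v : F | v ^ d + (1 - v) ^ d = 1} = ↑S := by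
    ext v; simp [hS]
  rw [hset, Set.ncard_coe_finset]
  have hmemS : ∀ v : F, v ∈ S ↔ v ^ d + (1 - v) ^ d = 1 := by
    intro v; simp [hS]
  have h0 : (0 : F) ∈ S := by
    rw [hmemS]; simp [zero_pow hd.ne']
  have h1 : (1 : F) ∈ S := by
    rw [hmemS]; simp [zero_pow hd.ne']
  have hm1 : (-1 : F) ∈ S := by
    rw [hmemS]
    rw [hodd.neg_one_pow]
    have : (1 : F) - (-1) = -1 := by linear_combination h3
    rw [this, hodd.neg_one_pow]
    linear_combination -h3
  set T : Finset F := S \ {0, 1, -1} with hT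
  have hsub : ({0, 1, -1} : Finset F) ⊆ S := by
    intro x hx
    simp only [Finset.mem_insert, Finset.mem_singleton] at hx
    rcases hx with rfl | rfl | rfl <;> assumption
  have hcard3 : ({0, 1, -1} : Finset F).card = 3 := by
    rw [Finset.card_insert_of_notMem, Finset.card_insert_of_notMem] <;>
      simp [hne0.symm, hne1.symm, Ne.symm hne0, Ne.symm hne1]
  have hScard : S.card = T.card + 3 := by
    have := Finset.card_sdiff_of_subset hsub
    have hle := Finset.card_le_card hsub
    rw [hT, this, hcard3]
    omega
  have hmemT : ∀ v : F, v ∈ T ↔ (v ^ d + (1 - v) ^ d = 1 ∧ v ≠ 0 ∧ v ≠ 1 ∧ v ≠ -1) := by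
    intro v
    rw [hT, Finset.mem_sdiff, hmemS]
    simp [and_assoc]
  -- 2 ∣ T.card
  haveI : Fact (Nat.Prime 2) := ⟨by norm_num⟩
  haveI : Fact (Nat.Prime 3) := ⟨by norm_num⟩
  have h2T : 2 ∣ T.card := by
    apply aux_dvd 2 T (fun v => 1 - v)
    · intro v hv
      rw [hmemT] at hv ⊢
      obtain ⟨heq, hv0, hv1, hvm⟩ := hv
      refine ⟨by rw [sub_sub_cancel]; linear_combination heq, ?_, ?_, ?_⟩
      · intro h; exact hv1 (by linear_combination -h)
      · intro h; exact hv0 (by linear_combination -h)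
      · intro h; exact hvm (by linear_combination h3 - h)
    · intro v _; simp [sub_sub_cancel]
    · intro v hv h
      rw [hmemT] at hv
      exact hv.2.2.2 (by linear_combination h + v * h3)
  have h3T : 3 ∣ T.card := by
    apply aux_dvd 3 T (fun v => (1 - v)⁻¹)
    · intro v hv
      rw [hmemT] at hv ⊢
      obtain ⟨heq, hv0, hv1, hvm⟩ := hv
      have hs : (1 : F) - v ≠ 0 := sub_ne_zero.mpr (Ne.symm hv1)
      have h1w : 1 - (1 - v)⁻¹ = -v * (1 - v)⁻¹ := by
        linear_combination (-1 : F) * mul_inv_cancel₀ hs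
      refine ⟨?_, inv_ne_zero hs, ?_, ?_⟩
      · rw [h1w, mul_pow, hodd.neg_pow, inv_pow]
        have hvd : (1 - v) ^ d = 1 - v ^ d := by linear_combination heq
        rw [hvd]
        have hnz : (1 : F) - v ^ d ≠ 0 := by
          rw [← hvd]; exact pow_ne_zero _ hs
        field_simp
        ring
      · intro h
        rw [inv_eq_one] at h
        exact hv0 (by linear_combination -h)
      · intro h
        rw [inv_eq_iff_eq_inv] at h
        have : ((-1 : F))⁻¹ = -1 := by rw [inv_neg, inv_one]
        rw [this] at h
        exact hvm (by linear_combination h3 - h)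
    · intro v hv
      rw [hmemT] at hv
      obtain ⟨heq, hv0, hv1, hvm⟩ := hv
      have hs : (1 : F) - v ≠ 0 := sub_ne_zero.mpr (Ne.symm hv1)
      show (1 - (1 - (1 - v)⁻¹)⁻¹)⁻¹ = v
      have e1 : 1 - (1 - v)⁻¹ = -v * (1 - v)⁻¹ := by
        linear_combination (-1 : F) * mul_inv_cancel₀ hs
      rw [e1]
      have e2 : (-v * (1 - v)⁻¹)⁻¹ = (1 - v) * (-v)⁻¹ := by
        rw [mul_inv, inv_inv, mul_comm]
      rw [e2]
      have e3 : 1 - (1 - v) * (-v)⁻¹ = v⁻¹ := by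
        rw [inv_neg]
        linear_combination (-1 : F) * mul_inv_cancel₀ hv0
      rw [e3, inv_inv]
    · intro v hv h
      rw [hmemT] at hv
      have hs : (1 : F) - v ≠ 0 := sub_ne_zero.mpr (Ne.symm hv.2.2.1)
      have h' : v * (1 - v) = 1 := by
        field_simp at h
        linear_combination -h
      have hsq : (v + 1) ^ 2 = 0 := by linear_combination -h' + v * h3
      have := pow_eq_zero_iff (n := 2) (by norm_num) |>.mp hsq
      exact hv.2.2.2 (by linear_combination this)
  have h6 : 6 ∣ T.card := Nat.Coprime.mul_dvd_of_dvd_of_dvd (by norm_num) h2T h3T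
  omega
end

section
/- Let F be a finite field of characteristic 2 with |F| ≡ 1 (mod 3), and d a positive integer with gcd(d, |F*|) = 1. Then the number of v ∈ F satisfying v^d + (1-v)^d = 1 is congruent to 4 modulo 6. -/
lemma aux_dvd_s8 {α : Type*} [Fintype α] (p : ℕ) [hp : Fact p.Prime]
    (σ : Equiv.Perm α) (hσ : σ ^ p = 1) (hfix : ∀ a, σ a ≠ a) :
    p ∣ Fintype.card α := by
  classical
  rcases isEmpty_or_nonempty α with h | h
  · simp [Fintype.card_eq_zero]
  · have hσne : σ ≠ 1 := by
      obtain ⟨a⟩ := h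
      intro h1
      exact hfix a (by simp [h1])
    have hord : orderOf σ = p := by
      have h1 : orderOf σ ∣ p := orderOf_dvd_of_pow_eq_one hσ
      rcases (Nat.Prime.eq_one_or_self_of_dvd hp.out _ h1) with h2 | h2
      · exact absurd (orderOf_eq_one_iff.mp h2) hσne
      · exact h2
    set H := Subgroup.zpowers σ with hH
    have hpg : IsPGroup p H := by
      apply IsPGroup.of_card (n := 1)
      rw [Nat.card_zpowers, hord, pow_one]
    have hfixed : MulAction.fixedPoints H α = ∅ := by
      ext a
      simp only [Set.mem_empty_iff_false, iff_false, MulAction.mem_fixedPoints]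
      intro hall
      exact hfix a (hall ⟨σ, Subgroup.mem_zpowers σ⟩)
    have := hpg.card_modEq_card_fixedPoints (α := α)
    rw [hfixed] at this
    simpa [Nat.modEq_zero_iff_dvd] using this

theorem stmt_8 (F : Type*) [Field F] [Fintype F] [CharP F 2]
    (hF : Fintype.card F % 3 = 1)
    (d : ℕ) (hd : 0 < d) (hcop : Nat.Coprime d (Fintype.card F - 1)) :
    {v : F | v ^ d + (1 - v) ^ d = 1}.ncard % 6 = 4 := by
  classical
  have hq2 : 2 ≤ Fintype.card F := Fintype.one_lt_card
  have h3dvd : 3 ∣ Fintype.card F - 1 := by omega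
  have : Fact (Nat.Prime 3) := ⟨by norm_num⟩
  obtain ⟨u, hu⟩ := exists_prime_orderOf_dvd_card (G := Fˣ) 3
    (by rwa [Fintype.card_units])
  set ω : F := (u : F) with hωdef
  have hω3 : ω ^ 3 = 1 := by
    have h := pow_orderOf_eq_one u
    rw [hu] at h
    have h2' : ((u ^ 3 : Fˣ) : F) = 1 := by rw [h]; rfl
    push_cast at h2'
    rw [hωdef]
    exact h2'
  have hω1 : ω ≠ 1 := by
    intro h
    have : u = 1 := Units.ext h
    rw [this] at hu
    simp at hu
  have hω0 : ω ≠ 0 := by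
    intro h
    rw [h] at hω3
    simp at hω3
  have hωq : ω ^ 2 + ω + 1 = 0 := by
    have hfac : (ω - 1) * (ω ^ 2 + ω + 1) = 0 := by
      have : (ω - 1) * (ω ^ 2 + ω + 1) = ω ^ 3 - 1 := by ring
      rw [this, hω3, sub_self]
    rcases mul_eq_zero.mp hfac with h | h
    · exact absurd (sub_eq_zero.mp h) hω1
    · exact h
  -- char 2 facts
  have htwo : (2 : F) = 0 := CharTwo.two_eq_zero
  have h2 : ∀ a : F, a + a = 0 := fun a => CharTwo.add_self_eq_zero a
  have hsub : ∀ a b : F, a - b = a + b := fun a b => CharTwo.sub_eq_add a b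
  have hω2ne1 : ω ^ 2 ≠ 1 := by
    intro h
    have h3 : ω ^ 3 = ω ^ 2 * ω := by ring
    rw [h, one_mul, hω3] at h3
    exact hω1 h3.symm
  have hωne : ω ≠ ω ^ 2 := by
    intro h
    have h4 : ω * ω = ω * 1 := by rw [mul_one, ← sq, ← h]
    exact hω1 (mul_left_cancel₀ hω0 h4)
  have hω20 : ω ^ 2 ≠ 0 := pow_ne_zero _ hω0
  have hω2eq : ω ^ 2 = 1 + ω := by linear_combination hωq - (ω + 1) * htwo
  have hωinv : ω⁻¹ = ω ^ 2 := by
    have hm : ω * ω ^ 2 = 1 := by rw [← pow_succ']; exact hω3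
    field_simp
    linear_combination (1 - ω ^ 3) * htwo + hω3
  -- roots of x² + x + 1
  have hroots : ∀ v : F, v * v + v + 1 = 0 → v = ω ∨ v = ω ^ 2 := by
    intro v hv
    have hfac : (v + ω) * (v + ω + 1) = 0 := by
      linear_combination hv + hωq + (v * ω - 1) * htwo
    rcases mul_eq_zero.mp hfac with h | h
    · left; linear_combination h - ω * htwo
    · right; rw [hω2eq]; linear_combination h - (ω + 1) * htwo
  -- d coprime to 3
  have hd3 : ¬ (3 ∣ d) := by
    intro h
    have hc : Nat.gcd d 3 = 1 := Nat.Coprime.coprime_dvd_right h3dvd hcop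
    have h9 := Nat.dvd_gcd h (dvd_refl 3)
    rw [hc] at h9
    norm_num at h9
  -- x := ω ^ d facts
  set x := ω ^ d with hxdef
  have hx3 : x ^ 3 = 1 := by rw [hxdef, ← pow_mul, mul_comm, pow_mul, hω3, one_pow]
  have hx1 : x ≠ 1 := by
    intro h
    have hux : ((u ^ d : Fˣ) : F) = 1 := by push_cast; rw [← hωdef, ← hxdef, h]
    have hu1 : u ^ d = 1 := Units.ext (by rw [hux]; rfl)
    have := orderOf_dvd_of_pow_eq_one hu1
    rw [hu] at this
    exact hd3 this
  have hxq : x ^ 2 + x + 1 = 0 := by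
    have hfac : (x - 1) * (x ^ 2 + x + 1) = 0 := by
      have : (x - 1) * (x ^ 2 + x + 1) = x ^ 3 - 1 := by ring
      rw [this, hx3, sub_self]
    rcases mul_eq_zero.mp hfac with h | h
    · exact absurd (sub_eq_zero.mp h) hx1
    · exact h
  have hxsum : x + x ^ 2 = 1 := by linear_combination hxq - htwo
  -- the solution predicate
  set P : F → Prop := fun v => v ^ d + (1 - v) ^ d = 1 with hPdef
  have hP : ∀ v : F, P v ↔ v ^ d + (1 + v) ^ d = 1 := by
    intro v; rw [hPdef]; simp only; rw [hsub]
  have hcancel : ∀ a b : F, 1 + a = b → a = 1 + b := by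
    intro a b h
    rw [← h, ← add_assoc, h2 1, zero_add]
  have mem0 : P 0 := by rw [hP]; simp [zero_pow hd.ne']
  have mem1 : P 1 := by
    rw [hP]
    rw [show (1:F) + 1 = 0 from h2 1]
    simp [zero_pow hd.ne']
  have hP_add : ∀ v : F, P v → P (1 + v) := by
    intro v hv
    rw [hP] at hv ⊢
    rw [← add_assoc, h2 1, zero_add, add_comm]
    exact hv
  have hP_inv : ∀ v : F, v ≠ 0 → P v → P v⁻¹ := by
    intro v hv0 hv
    rw [hP] at hv ⊢
    have hkey : (1 + v) ^ d = 1 + v ^ d := by linear_combination hv - v ^ d * htwo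
    have hrw : (1 : F) + v⁻¹ = (1 + v) * v⁻¹ := by
      field_simp
      ring
    rw [hrw, mul_pow, hkey, inv_pow]
    have hvd : v ^ d ≠ 0 := pow_ne_zero _ hv0
    field_simp
    linear_combination htwo
  have memω : P ω := by
    rw [hP, ← hω2eq]
    have : (ω ^ 2) ^ d = x ^ 2 := by rw [← pow_mul, mul_comm, pow_mul, hxdef]
    rw [this, ← hxdef]
    exact hxsum
  have hωalt : (1 : F) + ω ^ 2 = ω := by
    rw [hω2eq, ← add_assoc, h2 1, zero_add]
  have memω2 : P (ω ^ 2) := by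
    rw [hP, hωalt]
    have : (ω ^ 2) ^ d = x ^ 2 := by rw [← pow_mul, mul_comm, pow_mul, hxdef]
    rw [this, ← hxdef, add_comm]
    exact hxsum
  -- finsets
  set S : Finset F := Finset.univ.filter P with hSdef
  have hmemS : ∀ v, v ∈ S ↔ P v := by intro v; simp [hSdef]
  set Q : Finset F := {0, 1, ω, ω ^ 2} with hQdef
  set T : Finset F := S.filter (fun v => v ∉ Q) with hTdef
  have hmemT : ∀ v, v ∈ T ↔ P v ∧ v ≠ 0 ∧ v ≠ 1 ∧ v ≠ ω ∧ v ≠ ω ^ 2 := by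
    intro v
    simp [hTdef, hmemS, hQdef, not_or, and_assoc]
  -- cardinality split
  have hsplit := Finset.card_filter_add_card_filter_not
    (s := S) (p := fun v => v ∉ Q)
  simp only [not_not] at hsplit
  have hQsub : S.filter (fun v => v ∈ Q) = Q := by
    ext v
    simp only [Finset.mem_filter, hmemS]
    constructor
    · exact fun h => h.2
    · intro h
      refine ⟨?_, h⟩
      rw [hQdef] at h
      simp only [Finset.mem_insert, Finset.mem_singleton] at h
      rcases h with h | h | h | h <;> rw [h]
      · exact mem0
      · exact mem1
      · exact memω
      · exact memω2
  have hQcard : Q.card = 4 := by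
    rw [hQdef]
    rw [Finset.card_insert_of_notMem (by
      simp only [Finset.mem_insert, Finset.mem_singleton]
      push_neg
      exact ⟨zero_ne_one, Ne.symm hω0, Ne.symm hω20⟩)]
    rw [Finset.card_insert_of_notMem (by
      simp only [Finset.mem_insert, Finset.mem_singleton]
      push_neg
      exact ⟨Ne.symm hω1, Ne.symm hω2ne1⟩)]
    rw [Finset.card_insert_of_notMem (by simpa using hωne)]
    simp
  have hScard : S.card = T.card + 4 := by
    rw [← hsplit, hQsub, hQcard, hTdef]
  -- the involution v ↦ 1 + v on T
  have hT_add : ∀ v : F, v ∈ T → 1 + v ∈ T := by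
    intro v hv
    rw [hmemT] at hv ⊢
    obtain ⟨hPv, hv0, hv1, hvω, hvω2⟩ := hv
    refine ⟨hP_add v hPv, ?_, ?_, ?_, ?_⟩
    · intro h; exact hv1 (by rw [hcancel _ _ h, add_zero])
    · intro h; exact hv0 (by rw [hcancel _ _ h, h2 1])
    · intro h; exact hvω2 (by rw [hcancel _ _ h, ← hω2eq])
    · intro h; exact hvω (by rw [hcancel _ _ h, hωalt])
  let g : ↥T → ↥T := fun a => ⟨1 + a.1, hT_add a.1 a.2⟩
  have hg_inv : Function.Involutive g := by
    intro a
    apply Subtype.ext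
    show (1 : F) + (1 + a.1) = a.1
    rw [← add_assoc, h2 1, zero_add]
  have h2dvd : 2 ∣ T.card := by
    have : Fact (Nat.Prime 2) := ⟨by norm_num⟩
    have hres := aux_dvd_s8 2 (hg_inv.toPerm g) (by
        ext a
        simp only [sq, Equiv.Perm.mul_apply, Equiv.Perm.one_apply,
          Function.Involutive.coe_toPerm]
        exact congrArg Subtype.val (hg_inv a))
      (by
        intro a h
        simp only [Function.Involutive.coe_toPerm] at h
        have h' : (1 : F) + a.1 = a.1 := congrArg Subtype.val h
        have : (1 : F) = 0 := by
          have := congrArg (· + a.1) (zero_add a.1).symm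
          nth_rewrite 2 [← zero_add a.1] at h'
          exact add_right_cancel h'
        exact one_ne_zero this)
    rwa [Fintype.card_coe] at hres
  -- the 3-cycle v ↦ (1 + v)⁻¹ on T
  have hω2inv : (ω ^ 2)⁻¹ = ω := by
    have hm : ω * ω ^ 2 = 1 := by rw [← pow_succ']; exact hω3
    exact inv_eq_of_mul_eq_one_left hm
  have hT_inv : ∀ v : F, v ∈ T → (1 + v)⁻¹ ∈ T := by
    intro v hv
    rw [hmemT] at hv
    obtain ⟨hPv, hv0, hv1, hvω, hvω2⟩ := hv
    have h1v : (1 : F) + v ≠ 0 := by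
      intro h; exact hv1 (by rw [hcancel _ _ h, add_zero])
    rw [hmemT]
    refine ⟨hP_inv _ h1v (hP_add v hPv), inv_ne_zero h1v, ?_, ?_, ?_⟩
    · intro h
      have : (1 : F) + v = 1 := by rw [← inv_inv (1 + v), h, inv_one]
      exact hv0 (by rw [hcancel _ _ this, h2 1])
    · intro h
      have h' : (1 : F) + v = ω ^ 2 := by rw [← inv_inv (1 + v), h, hωinv]
      exact hvω (by rw [hcancel _ _ h', hωalt])
    · intro h
      have h' : (1 : F) + v = ω := by rw [← inv_inv (1 + v), h, hω2inv]
      exact hvω2 (by rw [hcancel _ _ h', ← hω2eq])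
  let f : ↥T → ↥T := fun a => ⟨(1 + a.1)⁻¹, hT_inv a.1 a.2⟩
  have hne01 : ∀ a : ↥T, a.1 ≠ 0 ∧ (1 : F) + a.1 ≠ 0 := by
    intro a
    have hv := (hmemT a.1).mp a.2
    refine ⟨hv.2.1, ?_⟩
    intro h
    exact hv.2.2.1 (by rw [hcancel _ _ h, add_zero])
  have key3 : ∀ v : F, v ≠ 0 → (1 : F) + v ≠ 0 →
      (1 + (1 + (1 + v)⁻¹)⁻¹)⁻¹ = v := by
    intro v hv0 h1v
    have hmid : (1 : F) + (1 + v)⁻¹ = v * (1 + v)⁻¹ := by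
      field_simp
      linear_combination htwo
    rw [hmid, mul_inv, inv_inv]
    have hmid2 : (1 : F) + v⁻¹ * (1 + v) = v⁻¹ := by
      field_simp
      linear_combination v * htwo
    rw [hmid2, inv_inv]
  have hf3 : ∀ a : ↥T, f (f (f a)) = a := by
    intro a
    apply Subtype.ext
    obtain ⟨hv0, h1v⟩ := hne01 a
    show (1 + (1 + (1 + a.1)⁻¹)⁻¹)⁻¹ = a.1
    exact key3 _ hv0 h1v
  let σf : Equiv.Perm ↥T := ⟨f, f ∘ f, fun a => hf3 a, fun a => hf3 a⟩
  have h3dvdT : 3 ∣ T.card := by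
    have : Fact (Nat.Prime 3) := ⟨by norm_num⟩
    have hres := aux_dvd_s8 3 σf (by
        ext a
        rw [show (σf ^ 3) a = σf (σf (σf a)) by rw [pow_succ, pow_succ, pow_one]; rfl]
        exact congrArg Subtype.val (hf3 a))
      (by
        intro a h
        have h' : (1 + a.1)⁻¹ = a.1 := congrArg Subtype.val h
        obtain ⟨hv0, h1v⟩ := hne01 a
        have hm : a.1 * (1 + a.1) = 1 := by
          nth_rewrite 1 [← h']
          exact inv_mul_cancel₀ h1v
        have hq : a.1 * a.1 + a.1 + 1 = 0 := by
          linear_combination hm + htwo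
        have hv := (hmemT a.1).mp a.2
        rcases hroots a.1 hq with h | h
        · exact hv.2.2.2.1 h
        · exact hv.2.2.2.2 h)
    rwa [Fintype.card_coe] at hres
  have h6 : 6 ∣ T.card :=
    Nat.Coprime.mul_dvd_of_dvd_of_dvd (by norm_num) h2dvd h3dvdT
  have hset : Set.ofPred P = ↑S := by
    ext v
    simp [hmemS v]
  rw [hset, Set.ncard_coe_finset, hScard]
  omega
end

section
/- Let F be a finite field of characteristic 2 with |F| ≡ 2 (mod 3), and d a positive integer with gcd(d, |F*|) = 1. Then the number of v ∈ F satisfying v^d + (1-v)^d = 1 is congruent to 2 modulo 6. -/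
/-- If `f` acts on a finset `s` as a fixed-point-free involution, then `2 ∣ s.card`. -/
lemma two_dvd_card_of_invol {α : Type*} [DecidableEq α] (f : α → α) (s : Finset α)
    (hmem : ∀ a ∈ s, f a ∈ s) (h2 : ∀ a ∈ s, f (f a) = a) (hne : ∀ a ∈ s, f a ≠ a) :
    2 ∣ s.card := by
  induction s using Finset.strongInduction with
  | _ s ih =>
    rcases s.eq_empty_or_nonempty with rfl | ⟨a, ha⟩
    · simp
    · have hfa : f a ∈ s := hmem a ha
      have hfane : f a ≠ a := hne a ha
      set t := (s.erase a).erase (f a) with ht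
      have htsub : t ⊆ s := (Finset.erase_subset _ _).trans (Finset.erase_subset _ _)
      have htss : t ⊂ s := lt_of_le_of_lt (Finset.erase_subset _ _) (Finset.erase_ssubset ha)
      have hmem_t : ∀ b, b ∈ t ↔ b ∈ s ∧ b ≠ a ∧ b ≠ f a := by
        intro b
        simp only [ht, Finset.mem_erase]
        tauto
      have hmt : ∀ b ∈ t, f b ∈ t := by
        intro b hb
        obtain ⟨hbs, hba, hbfa⟩ := (hmem_t b).1 hb
        refine (hmem_t (f b)).2 ⟨hmem b hbs, ?_, ?_⟩
        · intro h
          apply hbfa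
          rw [← h2 b hbs, h]
        · intro h
          apply hba
          have h' : f (f b) = f (f a) := by rw [h]
          rw [h2 b hbs, h2 a ha] at h'
          exact h'
      have h2t := ih t htss hmt (fun b hb => h2 b (htsub hb)) (fun b hb => hne b (htsub hb))
      have c1 : (s.erase a).card = s.card - 1 := Finset.card_erase_of_mem ha
      have hfa2 : f a ∈ s.erase a := Finset.mem_erase.2 ⟨hfane, hfa⟩
      have c2 : t.card = (s.erase a).card - 1 := Finset.card_erase_of_mem hfa2
      have p1 : 0 < s.card := Finset.card_pos.2 ⟨a, ha⟩
      have p2 : 0 < (s.erase a).card := Finset.card_pos.2 ⟨f a, hfa2⟩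
      omega

/-- If `f` acts on a finset `s` with `f³ = id` and no fixed points, then `3 ∣ s.card`. -/
lemma three_dvd_card_of_triple {α : Type*} [DecidableEq α] (f : α → α) (s : Finset α)
    (hmem : ∀ a ∈ s, f a ∈ s) (h3 : ∀ a ∈ s, f (f (f a)) = a) (hne : ∀ a ∈ s, f a ≠ a) :
    3 ∣ s.card := by
  induction s using Finset.strongInduction with
  | _ s ih =>
    rcases s.eq_empty_or_nonempty with rfl | ⟨a, ha⟩
    · simp
    · have hfa : f a ∈ s := hmem a ha
      have hffa : f (f a) ∈ s := hmem _ hfa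
      have hfane : f a ≠ a := hne a ha
      have hffane : f (f a) ≠ a := by
        intro h
        apply hfane
        have h' := congrArg f h
        rw [h3 a ha] at h'
        exact h'.symm
      have hfffne : f (f a) ≠ f a := hne (f a) hfa
      set t := ((s.erase a).erase (f a)).erase (f (f a)) with ht
      have htsub : t ⊆ s :=
        (Finset.erase_subset _ _).trans ((Finset.erase_subset _ _).trans (Finset.erase_subset _ _))
      have htss : t ⊂ s :=
        lt_of_le_of_lt ((Finset.erase_subset _ _).trans (Finset.erase_subset _ _))
          (Finset.erase_ssubset ha)
      have hmem_t : ∀ b, b ∈ t ↔ b ∈ s ∧ b ≠ a ∧ b ≠ f a ∧ b ≠ f (f a) := by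
        intro b
        simp only [ht, Finset.mem_erase]
        tauto
      have hmt : ∀ b ∈ t, f b ∈ t := by
        intro b hb
        obtain ⟨hbs, hba, hbfa, hbffa⟩ := (hmem_t b).1 hb
        refine (hmem_t (f b)).2 ⟨hmem b hbs, ?_, ?_, ?_⟩
        · intro h
          apply hbffa
          have hq : f (f (f b)) = f (f a) := by rw [h]
          rw [h3 b hbs] at hq
          exact hq
        · intro h
          apply hba
          have hq : f (f (f b)) = f (f (f a)) := by rw [h]
          rw [h3 b hbs, h3 a ha] at hq
          exact hq
        · intro h
          apply hbfa
          have hq : f (f (f b)) = f (f (f (f a))) := by rw [h]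
          rw [h3 b hbs, h3 (f a) hfa] at hq
          exact hq
      have h3t := ih t htss hmt (fun b hb => h3 b (htsub hb)) (fun b hb => hne b (htsub hb))
      have c1 : (s.erase a).card = s.card - 1 := Finset.card_erase_of_mem ha
      have hfa2 : f a ∈ s.erase a := Finset.mem_erase.2 ⟨hfane, hfa⟩
      have c2 : ((s.erase a).erase (f a)).card = (s.erase a).card - 1 :=
        Finset.card_erase_of_mem hfa2
      have hffa2 : f (f a) ∈ (s.erase a).erase (f a) :=
        Finset.mem_erase.2 ⟨hfffne, Finset.mem_erase.2 ⟨hffane, hffa⟩⟩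
      have c3 : t.card = ((s.erase a).erase (f a)).card - 1 := Finset.card_erase_of_mem hffa2
      have p1 : 0 < s.card := Finset.card_pos.2 ⟨a, ha⟩
      have p2 : 0 < (s.erase a).card := Finset.card_pos.2 ⟨f a, hfa2⟩
      have p3 : 0 < ((s.erase a).erase (f a)).card := Finset.card_pos.2 ⟨f (f a), hffa2⟩
      omega

theorem stmt_9 (F : Type*) [Field F] [Fintype F] [CharP F 2]
    (hF : Fintype.card F % 3 = 2)
    (d : ℕ) (hd : 0 < d) (hcop : Nat.Coprime d (Fintype.card F - 1)) :
    {v : F | v ^ d + (1 - v) ^ d = 1}.ncard % 6 = 2 := by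
  classical
  have htwo : (2 : F) = 0 := CharTwo.two_eq_zero
  -- no root of x^2 + x + 1
  have hroot : ∀ v : F, v ^ 2 + v + 1 ≠ 0 := by
    intro v hv
    have hv0 : v ≠ 0 := by rintro rfl; simp at hv
    have hv1 : v ≠ 1 := by
      rintro rfl
      exact one_ne_zero (α := F) (by linear_combination hv - htwo)
    have hcube : v ^ 3 = 1 := by linear_combination (v - 1) * hv
    have hq : v ^ (Fintype.card F - 1) = 1 := FiniteField.pow_card_sub_one_eq_one v hv0
    have ho3 : orderOf v ∣ 3 := orderOf_dvd_of_pow_eq_one hcube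
    have hoq : orderOf v ∣ Fintype.card F - 1 := orderOf_dvd_of_pow_eq_one hq
    have hnd : ¬ (3 ∣ (Fintype.card F - 1)) := by omega
    have hcop3 : Nat.Coprime 3 (Fintype.card F - 1) :=
      (Nat.Prime.coprime_iff_not_dvd (by norm_num)).2 hnd
    have hdg : orderOf v ∣ Nat.gcd 3 (Fintype.card F - 1) := Nat.dvd_gcd ho3 hoq
    rw [hcop3.gcd_eq_one] at hdg
    have : orderOf v = 1 := Nat.dvd_one.1 hdg
    exact hv1 (orderOf_eq_one_iff.1 this)
  set s : Finset F := Finset.univ.filter (fun v : F => v ^ d + (1 - v) ^ d = 1) with hs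
  have hset : {v : F | v ^ d + (1 - v) ^ d = 1} = ↑s := by
    ext v; simp [hs]
  rw [hset, Set.ncard_coe_finset]
  have hmem_s : ∀ v : F, v ∈ s ↔ v ^ d + (1 - v) ^ d = 1 := by
    intro v; simp [hs]
  have h0 : (0 : F) ∈ s := by
    rw [hmem_s]; simp [zero_pow hd.ne']
  have h1 : (1 : F) ∈ s := by
    rw [hmem_s]; simp [zero_pow hd.ne']
  set t := (s.erase 0).erase 1 with htdef
  have hmem_t : ∀ v : F, v ∈ t ↔ (v ^ d + (1 - v) ^ d = 1 ∧ v ≠ 0 ∧ v ≠ 1) := by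
    intro v
    simp only [htdef, Finset.mem_erase, hmem_s]
    tauto
  -- symmetry v ↦ 1 - v
  have hsymm : ∀ v : F, v ^ d + (1 - v) ^ d = 1 → (1 - v) ^ d + (1 - (1 - v)) ^ d = 1 := by
    intro v hv
    rw [sub_sub_cancel, add_comm]
    exact hv
  -- symmetry v ↦ v⁻¹
  have hinv : ∀ v : F, v ≠ 0 → v ^ d + (1 - v) ^ d = 1 →
      (v⁻¹) ^ d + (1 - v⁻¹) ^ d = 1 := by
    intro v hv0 hP
    have hvd : v ^ d ≠ 0 := pow_ne_zero _ hv0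
    have e1 : (1 : F) - v⁻¹ = (1 - v) * v⁻¹ := by
      field_simp
      linear_combination (v - 1) * htwo
    rw [e1, mul_pow, inv_pow]
    field_simp
    linear_combination - hP + (1 - v) ^ d * htwo
  -- the order-2 map
  have f2mem : ∀ v ∈ t, (1 - v) ∈ t := by
    intro v hv
    obtain ⟨hP, hv0, hv1⟩ := (hmem_t v).1 hv
    refine (hmem_t _).2 ⟨hsymm v hP, sub_ne_zero.2 (Ne.symm hv1), ?_⟩
    intro h
    exact hv0 (by linear_combination -h)
  have f2invol : ∀ v ∈ t, (1 : F) - (1 - v) = v := by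
    intro v _; ring
  have f2ne : ∀ v ∈ t, (1 : F) - v ≠ v := by
    intro v _ h
    exact one_ne_zero (α := F) (by linear_combination h + v * htwo)
  -- the order-3 map g v = (1 - v)⁻¹
  have g3mem : ∀ v ∈ t, (1 - v)⁻¹ ∈ t := by
    intro v hv
    obtain ⟨hP, hv0, hv1⟩ := (hmem_t v).1 hv
    have h1v : (1 : F) - v ≠ 0 := sub_ne_zero.2 (Ne.symm hv1)
    refine (hmem_t _).2 ⟨?_, inv_ne_zero h1v, ?_⟩
    · exact hinv _ h1v (hsymm v hP)
    · intro h
      have h' : (1 : F) - v = 1 := by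
        rw [← inv_inv (1 - v), h, inv_one]
      exact hv0 (by linear_combination -h')
  have g3cube : ∀ v ∈ t, (1 - (1 - (1 - v)⁻¹)⁻¹)⁻¹ = v := by
    intro v hv
    obtain ⟨hP, hv0, hv1⟩ := (hmem_t v).1 hv
    have h1v : (1 : F) - v ≠ 0 := sub_ne_zero.2 (Ne.symm hv1)
    have h2v : (1 : F) - (1 - v)⁻¹ ≠ 0 := by
      rw [sub_ne_zero]
      intro h
      have h' : (1 : F) - v = 1 := by rw [← inv_inv (1 - v), ← h, inv_one]
      exact hv0 (by linear_combination -h')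
    have h3v : (1 : F) - (1 - (1 - v)⁻¹)⁻¹ ≠ 0 := by
      rw [sub_ne_zero]
      intro h
      have h' : (1 : F) - (1 - v)⁻¹ = 1 := by
        rw [← inv_inv (1 - (1 - v)⁻¹), ← h, inv_one]
      have h4 : ((1 : F) - v)⁻¹ = 0 := by linear_combination -h'
      exact inv_ne_zero h1v h4
    field_simp
    have e : (1 : F) - (1 - v) / -v = 1 / v := by
      rw [div_neg, sub_neg_eq_add, eq_div_iff hv0, add_mul, div_mul_cancel₀ _ hv0]
      ring
    rw [show (1 : F) - v - 1 = -v by ring, e, one_div_one_div]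
  have g3ne : ∀ v ∈ t, (1 - v)⁻¹ ≠ v := by
    intro v hv h
    obtain ⟨hP, hv0, hv1⟩ := (hmem_t v).1 hv
    have h1v : (1 : F) - v ≠ 0 := sub_ne_zero.2 (Ne.symm hv1)
    have hmul : v * (1 - v) = 1 := by
      have h' := congrArg (fun x => x * (1 - v)) h
      replace h' : (1 - v)⁻¹ * (1 - v) = v * (1 - v) := h'
      rw [inv_mul_cancel₀ h1v] at h'
      exact h'.symm
    exact hroot v (by linear_combination - hmul + v * htwo)
  have h2dvd : 2 ∣ t.card := two_dvd_card_of_invol (fun v => 1 - v) t f2mem f2invol f2ne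
  have h3dvd : 3 ∣ t.card := three_dvd_card_of_triple (fun v => (1 - v)⁻¹) t g3mem g3cube g3ne
  have h6dvd : 6 ∣ t.card := Nat.Coprime.mul_dvd_of_dvd_of_dvd (by norm_num) h2dvd h3dvd
  have h01 : (1 : F) ∈ s.erase 0 := Finset.mem_erase.2 ⟨one_ne_zero, h1⟩
  have c1 : (s.erase 0).card = s.card - 1 := Finset.card_erase_of_mem h0
  have c2 : t.card = (s.erase 0).card - 1 := Finset.card_erase_of_mem h01
  have p1 : 0 < s.card := Finset.card_pos.2 ⟨0, h0⟩
  have p2 : 0 < (s.erase 0).card := Finset.card_pos.2 ⟨1, h01⟩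
  omega
end

section
/- Let F be a finite field of characteristic p ≥ 5 with |F| ≡ 1 (mod 3), and d a positive integer with gcd(d, |F*|) = 1 such that 2^{d-1} = 1 in F. Then the number of v ∈ F satisfying v^d + (1-v)^d = 1 is congruent to 1 modulo 6. -/
lemma card_mod_two {α : Type*} [DecidableEq α] (f : α → α) :
    ∀ s : Finset α, (∀ x ∈ s, f x ∈ s) → (∀ x ∈ s, f (f x) = x) →
    s.card % 2 = (s.filter fun x => f x = x).card % 2 := by
  intro s
  induction s using Finset.strongInduction with
  | _ s ih =>
    intro hmem hper
    by_cases hall : ∀ x ∈ s, f x = x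
    · rw [Finset.filter_true_of_mem hall]
    · push_neg at hall
      obtain ⟨a, ha, hfa⟩ := hall
      set t := (s.erase a).erase (f a) with ht
      have hfas : f a ∈ s := hmem a ha
      have hfa' : f a ≠ a := hfa
      have h1 : f a ∈ s.erase a := Finset.mem_erase.2 ⟨hfa', hfas⟩
      have htsub : t ⊆ s := fun x hx => Finset.mem_of_mem_erase (Finset.mem_of_mem_erase hx)
      have hat : a ∉ t := fun h =>
        Finset.notMem_erase a s (Finset.mem_of_mem_erase h)
      have htss : t ⊂ s := Finset.ssubset_iff_of_subset htsub |>.2 ⟨a, ha, hat⟩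
      have hc1 : (s.erase a).card = s.card - 1 := Finset.card_erase_of_mem ha
      have hc2 : t.card = (s.erase a).card - 1 := Finset.card_erase_of_mem h1
      have hpos : 0 < s.card := Finset.card_pos.2 ⟨a, ha⟩
      have hpos2 : 0 < (s.erase a).card := Finset.card_pos.2 ⟨f a, h1⟩
      have hcard : s.card = t.card + 2 := by omega
      have hmem' : ∀ x ∈ t, f x ∈ t := by
        intro x hx
        have hxs : x ∈ s := htsub hx
        have hx1 : x ≠ a := (Finset.mem_erase.1 (Finset.mem_of_mem_erase hx)).1
        have hx2 : x ≠ f a := (Finset.mem_erase.1 hx).1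
        refine Finset.mem_erase.2 ⟨?_, Finset.mem_erase.2 ⟨?_, hmem x hxs⟩⟩
        · intro h; apply hx1; rw [← hper x hxs, h, hper a ha]
        · intro h; apply hx2; rw [← hper x hxs, h]
      have hper' : ∀ x ∈ t, f (f x) = x := fun x hx => hper x (htsub hx)
      have hfilter : s.filter (fun x => f x = x) = t.filter (fun x => f x = x) := by
        ext x
        simp only [Finset.mem_filter, ht, Finset.mem_erase]
        constructor
        · rintro ⟨hxs, hfx⟩
          refine ⟨⟨?_, ?_, hxs⟩, hfx⟩
          · rintro rfl; exact hfa' (by rw [← hfx, hper a ha])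
          · rintro rfl; exact hfa hfx
        · rintro ⟨⟨_, _, hxs⟩, hfx⟩; exact ⟨hxs, hfx⟩
      have hih := ih t htss hmem' hper'
      rw [hfilter]
      omega

lemma card_mod_three {α : Type*} [DecidableEq α] (f : α → α) :
    ∀ s : Finset α, (∀ x ∈ s, f x ∈ s) → (∀ x ∈ s, f (f (f x)) = x) →
    s.card % 3 = (s.filter fun x => f x = x).card % 3 := by
  intro s
  induction s using Finset.strongInduction with
  | _ s ih =>
    intro hmem hper
    by_cases hall : ∀ x ∈ s, f x = x
    · rw [Finset.filter_true_of_mem hall]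
    · push_neg at hall
      obtain ⟨a, ha, hfa⟩ := hall
      have hfas : f a ∈ s := hmem a ha
      have hffas : f (f a) ∈ s := hmem _ hfas
      have hba : f a ≠ a := hfa
      have hca : f (f a) ≠ a := by
        intro h
        apply hba
        have := hper a ha
        rw [h] at this
        -- this : f a = a
        exact this
      have hcb : f (f a) ≠ f a := by
        intro h
        apply hca
        have h2 := congrArg f h
        rw [hper a ha] at h2
        -- h2 : a = f (f a)
        exact h2.symm
      set t := ((s.erase a).erase (f a)).erase (f (f a)) with ht
      have h1 : f a ∈ s.erase a := Finset.mem_erase.2 ⟨hba, hfas⟩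
      have h2' : f (f a) ∈ (s.erase a).erase (f a) :=
        Finset.mem_erase.2 ⟨hcb, Finset.mem_erase.2 ⟨hca, hffas⟩⟩
      have htsub : t ⊆ s := fun x hx =>
        Finset.mem_of_mem_erase (Finset.mem_of_mem_erase (Finset.mem_of_mem_erase hx))
      have hat : a ∉ t := fun h =>
        Finset.notMem_erase a s (Finset.mem_of_mem_erase (Finset.mem_of_mem_erase h))
      have htss : t ⊂ s := Finset.ssubset_iff_of_subset htsub |>.2 ⟨a, ha, hat⟩
      have hc1 : (s.erase a).card = s.card - 1 := Finset.card_erase_of_mem ha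
      have hc2 : ((s.erase a).erase (f a)).card = (s.erase a).card - 1 :=
        Finset.card_erase_of_mem h1
      have hc3 : t.card = ((s.erase a).erase (f a)).card - 1 := Finset.card_erase_of_mem h2'
      have hpos : 0 < s.card := Finset.card_pos.2 ⟨a, ha⟩
      have hpos2 : 0 < (s.erase a).card := Finset.card_pos.2 ⟨f a, h1⟩
      have hpos3 : 0 < ((s.erase a).erase (f a)).card := Finset.card_pos.2 ⟨f (f a), h2'⟩
      have hcard : s.card = t.card + 3 := by omega
      have hmemt : ∀ x, x ∈ t ↔ (x ∈ s ∧ x ≠ a ∧ x ≠ f a ∧ x ≠ f (f a)) := by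
        intro x
        simp only [ht, Finset.mem_erase]
        tauto
      have hmem' : ∀ x ∈ t, f x ∈ t := by
        intro x hx
        rw [hmemt] at hx
        obtain ⟨hxs, hx1, hx2, hx3⟩ := hx
        rw [hmemt]
        refine ⟨hmem x hxs, ?_, ?_, ?_⟩
        · intro h; apply hx3
          rw [← hper x hxs, h]
        · intro h
          apply hx1
          have := congrArg (fun y => f (f y)) h
          rw [hper x hxs, hper a ha] at this
          exact this
        · intro h
          apply hx2
          have := congrArg (fun y => f (f y)) h
          rw [hper x hxs] at this
          have h4 := congrArg f (hper a ha)
          -- this : x = f (f (f (f a)))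
          rw [this, h4]
      have hper' : ∀ x ∈ t, f (f (f x)) = x := fun x hx => hper x (htsub hx)
      have hfilter : s.filter (fun x => f x = x) = t.filter (fun x => f x = x) := by
        ext x
        simp only [Finset.mem_filter]
        constructor
        · rintro ⟨hxs, hfx⟩
          rw [hmemt]
          refine ⟨⟨hxs, ?_, ?_, ?_⟩, hfx⟩
          · rintro rfl; exact hfa hfx
          · rintro rfl
            exact hcb hfx
          · rintro rfl
            exact hca (hfx.symm.trans (hper a ha))
        · rintro ⟨hxt, hfx⟩; exact ⟨htsub hxt, hfx⟩
      have hih := ih t htss hmem' hper'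
      rw [hfilter]
      omega

theorem stmt_10 (F : Type*) [Field F] [Fintype F] (p : ℕ) [CharP F p] (hp : 5 ≤ p)
    (hF : Fintype.card F % 3 = 1)
    (d : ℕ) (hd : 0 < d) (hcop : Nat.Coprime d (Fintype.card F - 1))
    (h2 : (2 : F) ^ (d - 1) = 1) :
    {v : F | v ^ d + (1 - v) ^ d = 1}.ncard % 6 = 1 := by
  classical
  have hp' : Fact p.Prime := ⟨CharP.char_is_prime F p⟩
  set q := Fintype.card F with hq
  obtain ⟨n, hpn, hcard⟩ := FiniteField.card F p
  have hpodd : p % 2 = 1 := Nat.odd_iff.1 (hpn.odd_of_ne_two (by omega))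
  have hqodd : q % 2 = 1 := by
    rw [hq, hcard]
    have : Odd p := Nat.odd_iff.2 hpodd
    exact Nat.odd_iff.1 (this.pow)
  have hq2 : 2 ≤ q := Fintype.one_lt_card
  have hq6 : q % 6 = 1 := by omega
  have h2F : (2 : F) ≠ 0 := by
    intro h
    rw [show ((2:F)) = ((2:ℕ):F) by norm_cast, CharP.cast_eq_zero_iff F p 2] at h
    have := Nat.le_of_dvd (by norm_num) h
    omega
  have h3F : (3 : F) ≠ 0 := by
    intro h
    rw [show ((3:F)) = ((3:ℕ):F) by norm_cast, CharP.cast_eq_zero_iff F p 3] at h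
    have := Nat.le_of_dvd (by norm_num) h
    omega
  have hdodd : d % 2 = 1 := by
    rcases Nat.mod_two_eq_zero_or_one d with h | h
    · exfalso
      have h2d : (2:ℕ) ∣ d := Nat.dvd_of_mod_eq_zero h
      have h2q : (2:ℕ) ∣ (q - 1) := by omega
      have := Nat.dvd_gcd h2d h2q
      rw [hcop] at this
      omega
    · exact h
  have hd3 : ¬ (3:ℕ) ∣ d := by
    intro h3d
    have h3q : (3:ℕ) ∣ (q - 1) := by omega
    have := Nat.dvd_gcd h3d h3q
    rw [hcop] at this
    omega
  have hd6 : d % 6 = 1 ∨ d % 6 = 5 := by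
    rcases Nat.mod_two_eq_zero_or_one d with h | h <;> omega
  have hodd : Odd d := Nat.odd_iff.2 hdodd
  have h2d : (2:F) ^ d = 2 := by
    calc (2:F) ^ d = 2 ^ (d - 1 + 1) := by rw [Nat.sub_add_cancel hd]
    _ = 2 ^ (d-1) * 2 := pow_succ _ _
    _ = 2 := by rw [h2]; ring
  -- the solution set as a Finset
  set S : Finset F := Finset.univ.filter (fun v => v ^ d + (1 - v) ^ d = 1) with hS
  have hmemS : ∀ v : F, v ∈ S ↔ v ^ d + (1 - v) ^ d = 1 := by
    intro v; simp [hS]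
  have hset : {v : F | v ^ d + (1 - v) ^ d = 1} = ↑S := by
    ext v; simp [hS]
  rw [hset, Set.ncard_coe_finset]
  -- mod 2 : the involution v ↦ 1 - v
  have hσmem : ∀ v ∈ S, (1 - v) ∈ S := by
    intro v hv
    rw [hmemS] at hv ⊢
    rw [show (1:F) - (1 - v) = v by ring, add_comm]
    exact hv
  have hσinv : ∀ v ∈ S, 1 - (1 - v) = v := by intro v _; ring
  have hmod2 := card_mod_two (fun v => 1 - v) S hσmem hσinv
  have hhalf : (1:F) - 2⁻¹ = 2⁻¹ := by
    field_simp
    norm_num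
  have hhalfS : (2:F)⁻¹ ∈ S := by
    rw [hmemS, hhalf]
    simp only [inv_pow, h2d]
    field_simp
    norm_num
  have hfix2 : S.filter (fun v => 1 - v = v) = {(2:F)⁻¹} := by
    ext v
    simp only [Finset.mem_filter, Finset.mem_singleton]
    constructor
    · rintro ⟨hvS, hfix⟩
      field_simp
      linear_combination -hfix
    · rintro rfl
      exact ⟨hhalfS, hhalf⟩
  rw [hfix2, Finset.card_singleton] at hmod2
  -- mod 3 : the 3-cycle v ↦ (1 - v)⁻¹ on S \ {0, 1}
  have h0S : (0:F) ∈ S := by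
    rw [hmemS]
    simp [zero_pow hd.ne']
  have h1S : (1:F) ∈ S := by
    rw [hmemS]
    simp [zero_pow hd.ne']
  set T : Finset F := (S.erase 0).erase 1 with hT
  have hTmem : ∀ v : F, v ∈ T ↔ v ∈ S ∧ v ≠ 0 ∧ v ≠ 1 := by
    intro v
    simp only [hT, Finset.mem_erase]
    tauto
  have h1T : (1:F) ∈ S.erase 0 := Finset.mem_erase.2 ⟨one_ne_zero, h1S⟩
  have hcST : S.card = T.card + 2 := by
    have hc1 : (S.erase 0).card = S.card - 1 := Finset.card_erase_of_mem h0S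
    have hc2 : T.card = (S.erase 0).card - 1 := Finset.card_erase_of_mem h1T
    have hpos : 0 < S.card := Finset.card_pos.2 ⟨0, h0S⟩
    have hpos2 : 0 < (S.erase 0).card := Finset.card_pos.2 ⟨1, h1T⟩
    omega
  have hρmem : ∀ v ∈ T, (1 - v)⁻¹ ∈ T := by
    intro v hv
    rw [hTmem] at hv ⊢
    obtain ⟨hvS, hv0, hv1⟩ := hv
    have hsub : (1:F) - v ≠ 0 := sub_ne_zero_of_ne (Ne.symm hv1)
    refine ⟨?_, inv_ne_zero hsub, ?_⟩
    · rw [hmemS] at hvS ⊢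
      have key : (1:F) - (1 - v)⁻¹ = -v * (1 - v)⁻¹ := by
        field_simp
        ring
      rw [key, mul_pow, hodd.neg_pow, inv_pow]
      have hpow : ((1:F) - v) ^ d ≠ 0 := pow_ne_zero _ hsub
      field_simp
      linear_combination -hvS
    · intro h
      rw [inv_eq_one] at h
      exact hv0 (by linear_combination -h)
  have hρper : ∀ v ∈ T, (1 - (1 - (1 - v)⁻¹)⁻¹)⁻¹ = v := by
    intro v hv
    rw [hTmem] at hv
    obtain ⟨_, hv0, hv1⟩ := hv
    have hsub : (1:F) - v ≠ 0 := sub_ne_zero_of_ne (Ne.symm hv1)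
    have key : (1:F) - (1 - v)⁻¹ = -v * (1 - v)⁻¹ := by field_simp; ring
    rw [key]
    rw [show (-v * (1 - v)⁻¹)⁻¹ = -((1-v) * v⁻¹) by
      rw [mul_inv, inv_inv, inv_neg]; ring]
    rw [show (1:F) - -((1-v) * v⁻¹) = (v + (1 - v)) * v⁻¹ by
      field_simp; ring]
    rw [show v + ((1:F) - v) = 1 by ring, one_mul, inv_inv]
  have hmod3 := card_mod_three (fun v => (1 - v)⁻¹) T hρmem hρper
  -- construct a primitive sixth root of unity ω with ω² = ω - 1
  obtain ⟨g, hg⟩ := IsCyclic.exists_generator (α := Fˣ)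
  have hog : orderOf g = q - 1 := by
    rw [orderOf_eq_card_of_forall_mem_zpowers hg, Nat.card_eq_fintype_card,
      Fintype.card_units, hq]
  have hq7 : 7 ≤ q := by omega
  set k : ℕ := (q - 1) / 6 with hk
  have h6k : q - 1 = 6 * k := by omega
  have hkpos : 0 < k := by omega
  set x : F := (g : F) ^ k with hx
  have hgq : g ^ (q - 1) = 1 := by
    rw [← hog]; exact pow_orderOf_eq_one g
  have hx6 : x ^ 6 = 1 := by
    rw [hx, ← pow_mul, show k * 6 = q - 1 by omega]
    have : ((g ^ (q-1) : Fˣ) : F) = ((1 : Fˣ) : F) := by rw [hgq]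
    simpa using this
  have hxpow : ∀ m : ℕ, x ^ m = 1 → (q - 1) ∣ k * m := by
    intro m hm
    have : ((g ^ (k * m) : Fˣ) : F) = ((1 : Fˣ) : F) := by
      push_cast
      rw [pow_mul]
      exact hm
    have hu : g ^ (k * m) = 1 := Units.ext this
    rw [← hog]
    exact orderOf_dvd_of_pow_eq_one hu
  have hx3ne : x ^ 3 ≠ 1 := by
    intro h
    have := Nat.le_of_dvd (by omega) (hxpow 3 h)
    omega
  have hx2ne : x ^ 2 ≠ 1 := by
    intro h
    have := Nat.le_of_dvd (by omega) (hxpow 2 h)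
    omega
  have hx3 : x ^ 3 = -1 := by
    have hfac : (x ^ 3 - 1) * (x ^ 3 + 1) = 0 := by linear_combination hx6
    rcases mul_eq_zero.1 hfac with h | h
    · exact absurd (sub_eq_zero.1 h) hx3ne
    · exact eq_neg_of_add_eq_zero_left h
  have hxne : x ≠ -1 := by
    intro h
    apply hx2ne
    rw [h]
    ring
  have hω : x * x = x - 1 := by
    have hprod : (x + 1) * (x * x - x + 1) = 0 := by linear_combination hx3
    have hx1 : x + 1 ≠ 0 := fun h => hxne (by linear_combination h)
    have := (mul_eq_zero.1 hprod).resolve_left hx1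
    linear_combination this
  -- any root of z² = z - 1 lies in S
  have hsol : ∀ z : F, z * z = z - 1 → z ^ d + (1 - z) ^ d = 1 := by
    intro z hz
    have hz3 : z ^ 3 = -1 := by linear_combination (z + 1) * hz
    have hz6 : z ^ 6 = 1 := by
      have e : z ^ 6 = (z ^ 3) ^ 2 := by ring
      rw [e, hz3]; ring
    have hzb : (1 - z) * (1 - z) = (1 - z) - 1 := by linear_combination hz
    have hzb3 : (1 - z) ^ 3 = -1 := by linear_combination ((1 - z) + 1) * hzb
    have hzb6 : (1 - z) ^ 6 = 1 := by
      have e : (1 - z) ^ 6 = ((1 - z) ^ 3) ^ 2 := by ring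
      rw [e, hzb3]; ring
    have powd : ∀ w : F, w ^ 6 = 1 → w ^ d = w ^ (d % 6) := by
      intro w hw
      conv_lhs => rw [← Nat.div_add_mod d 6]
      rw [pow_add, pow_mul, hw, one_pow, one_mul]
    rw [powd z hz6, powd (1 - z) hzb6]
    rcases hd6 with h | h <;> rw [h]
    · ring
    · have hz5 : z ^ 5 = 1 - z := by
        have e : z ^ 5 = z ^ 3 * (z * z) := by ring
        rw [e, hz3, hz]; ring
      have hzb5 : (1 - z) ^ 5 = z := by
        have e : (1 - z) ^ 5 = (1 - z) ^ 3 * ((1 - z) * (1 - z)) := by ring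
        rw [e, hzb3, hzb]; ring
      rw [hz5, hzb5]; ring
  have hωS : x ∈ S := (hmemS x).2 (hsol x hω)
  have hωbar : (1 - x) * (1 - x) = (1 - x) - 1 := by linear_combination hω
  have hωbS : (1 - x) ∈ S := (hmemS _).2 (hsol _ hωbar)
  have hωne0 : x ≠ 0 := by
    intro h; rw [h] at hω; norm_num at hω
  have hωne1 : x ≠ 1 := by
    intro h; rw [h] at hω; norm_num at hω
  have hωbne0 : (1:F) - x ≠ 0 := sub_ne_zero_of_ne (Ne.symm hωne1)
  have hωbne1 : (1:F) - x ≠ 1 := by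
    intro h
    exact hωne0 (by linear_combination -h)
  have hωωb : x ≠ 1 - x := by
    intro h
    exact h3F (by linear_combination (1 - 2*x) * h + 4 * hω)
  have hωT : x ∈ T := (hTmem x).2 ⟨hωS, hωne0, hωne1⟩
  have hωbT : (1 - x) ∈ T := (hTmem _).2 ⟨hωbS, hωbne0, hωbne1⟩
  have hfixω : ((1:F) - x)⁻¹ = x := inv_eq_of_mul_eq_one_right (by linear_combination -hω)
  have hfixωb : ((1:F) - (1 - x))⁻¹ = 1 - x := by
    rw [show (1:F) - (1 - x) = x by ring]
    exact inv_eq_of_mul_eq_one_right (by linear_combination -hω)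
  have hfix3 : T.filter (fun v => (1 - v)⁻¹ = v) = {x, 1 - x} := by
    ext v
    simp only [Finset.mem_filter, Finset.mem_insert, Finset.mem_singleton]
    constructor
    · rintro ⟨hvT, hfix⟩
      have hv1 : v ≠ 1 := ((hTmem v).1 hvT).2.2
      have hsub : (1:F) - v ≠ 0 := sub_ne_zero_of_ne (Ne.symm hv1)
      have hqv : v * (1 - v) = 1 := by
        nth_rewrite 1 [← hfix]
        exact inv_mul_cancel₀ hsub
      have hfac : (v - x) * (v - (1 - x)) = 0 := by linear_combination -hqv - hω
      rcases mul_eq_zero.1 hfac with h | h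
      · exact Or.inl (sub_eq_zero.1 h)
      · exact Or.inr (sub_eq_zero.1 h)
    · rintro (rfl | rfl)
      · exact ⟨hωT, hfixω⟩
      · exact ⟨hωbT, hfixωb⟩
  have hcfix : ({x, 1 - x} : Finset F).card = 2 := by
    rw [Finset.card_insert_of_notMem (by simpa using hωωb), Finset.card_singleton]
  rw [hfix3, hcfix] at hmod3
  omega
end

section
/- Let F be a finite field of characteristic p ≥ 5 with |F| ≡ 2 (mod 3), and d a positive integer with gcd(d, |F*|) = 1 such that 2^{d-1} ≠ 1 in F. Then the number of v ∈ F satisfying v^d + (1-v)^d = 1 is congruent to 2 modulo 6. -/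
private lemma dvd_two_aux {α : Type*} [DecidableEq α] (f : α → α) :
    ∀ s : Finset α, (∀ a ∈ s, f a ∈ s) → (∀ a ∈ s, f (f a) = a) →
    (∀ a ∈ s, f a ≠ a) → 2 ∣ s.card := by
  intro s
  induction s using Finset.strongInduction with
  | _ s ih =>
    intro hm hff h1
    rcases s.eq_empty_or_nonempty with rfl | ⟨a, ha⟩
    · simp
    · have hfa := hm a ha
      set u : Finset α := {a, f a} with hu
      have hus : u ⊆ s := by
        intro x hx
        simp only [hu, Finset.mem_insert, Finset.mem_singleton] at hx
        rcases hx with rfl | rfl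
        · exact ha
        · exact hfa
      have hucard : u.card = 2 := Finset.card_pair (h1 a ha).symm
      set t : Finset α := s \ u with htdef
      have hat : a ∉ t := by simp [htdef, hu]
      have hts : t ⊂ s := Finset.ssubset_iff_of_subset (Finset.sdiff_subset)
        |>.mpr ⟨a, ha, hat⟩
      have htm : ∀ b ∈ t, f b ∈ t := by
        intro b hb
        have hbs : b ∈ s := (Finset.sdiff_subset) hb
        have hbu : b ∉ u := (Finset.mem_sdiff.mp hb).2
        refine Finset.mem_sdiff.mpr ⟨hm b hbs, ?_⟩
        intro hfu
        simp only [hu, Finset.mem_insert, Finset.mem_singleton] at hfu hbu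
        rcases hfu with h | h
        · exact hbu (Or.inr (by rw [← hff b hbs, h]))
        · have : f (f b) = f (f a) := by rw [h]
          rw [hff b hbs, hff a ha] at this
          exact hbu (Or.inl this)
      obtain ⟨c, hc⟩ := ih t hts htm (fun b hb => hff b ((Finset.sdiff_subset) hb))
        (fun b hb => h1 b ((Finset.sdiff_subset) hb))
      have hcard : t.card = s.card - u.card := Finset.card_sdiff_of_subset hus
      have hle : u.card ≤ s.card := Finset.card_le_card hus
      exact ⟨c + 1, by omega⟩

private lemma dvd_three_aux {α : Type*} [DecidableEq α] (f : α → α) :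
    ∀ s : Finset α, (∀ a ∈ s, f a ∈ s) → (∀ a ∈ s, f (f (f a)) = a) →
    (∀ a ∈ s, f a ≠ a) → (∀ a ∈ s, f (f a) ≠ a) → 3 ∣ s.card := by
  intro s
  induction s using Finset.strongInduction with
  | _ s ih =>
    intro hm hfff h1 h2
    rcases s.eq_empty_or_nonempty with rfl | ⟨a, ha⟩
    · simp
    · have hfa := hm a ha
      have hffa := hm _ hfa
      have hne12 : f (f a) ≠ f a := by
        intro h
        have h' : f (f (f a)) = f (f a) := congrArg f h
        rw [hfff a ha] at h'
        exact h2 a ha h'.symm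
      set u : Finset α := {a, f a, f (f a)} with hu
      have hus : u ⊆ s := by
        intro x hx
        simp only [hu, Finset.mem_insert, Finset.mem_singleton] at hx
        rcases hx with rfl | rfl | rfl
        exacts [ha, hfa, hffa]
      have hucard : u.card = 3 := by
        rw [hu]
        rw [Finset.card_insert_of_notMem (by simp [(h1 a ha).symm, (h2 a ha).symm]),
          Finset.card_pair hne12.symm]
      set t : Finset α := s \ u with htdef
      have hat : a ∉ t := by simp [htdef, hu]
      have hts : t ⊂ s := Finset.ssubset_iff_of_subset (Finset.sdiff_subset)
        |>.mpr ⟨a, ha, hat⟩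
      have htm : ∀ b ∈ t, f b ∈ t := by
        intro b hb
        have hbs : b ∈ s := (Finset.sdiff_subset) hb
        have hbu : b ∉ u := (Finset.mem_sdiff.mp hb).2
        refine Finset.mem_sdiff.mpr ⟨hm b hbs, ?_⟩
        intro hfu
        simp only [hu, Finset.mem_insert, Finset.mem_singleton] at hfu hbu
        push_neg at hbu
        rcases hfu with h | h | h
        · exact hbu.2.2 (by rw [← hfff b hbs, h])
        · have : f (f (f b)) = f (f (f a)) := by rw [h]
          rw [hfff b hbs, hfff a ha] at this
          exact hbu.1 this
        · have : f (f (f b)) = f (f (f (f a))) := by rw [h]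
          rw [hfff b hbs, hfff a ha] at this
          exact hbu.2.1 this
      obtain ⟨c, hc⟩ := ih t hts htm (fun b hb => hfff b ((Finset.sdiff_subset) hb))
        (fun b hb => h1 b ((Finset.sdiff_subset) hb))
        (fun b hb => h2 b ((Finset.sdiff_subset) hb))
      have hcard : t.card = s.card - u.card := Finset.card_sdiff_of_subset hus
      have hle : u.card ≤ s.card := Finset.card_le_card hus
      exact ⟨c + 1, by omega⟩

private lemma g_stable {F : Type*} [Field F] {d : ℕ} (hoddd : Odd d)
    {v : F} (hv : v ^ d + (1 - v) ^ d = 1) (hv1 : v ≠ 1) :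
    ((1-v)⁻¹) ^ d + (1-(1-v)⁻¹) ^ d = 1 := by
  have ha : (1:F) - v ≠ 0 := sub_ne_zero.mpr (fun h => hv1 h.symm)
  have e1 : (1:F) - (1-v)⁻¹ = -v * (1-v)⁻¹ := by field_simp; ring
  rw [e1, mul_pow, Odd.neg_pow hoddd, inv_pow]
  have had : ((1:F)-v) ^ d ≠ 0 := pow_ne_zero _ ha
  field_simp
  linear_combination -hv

private lemma g_cube {F : Type*} [Field F] {v : F} (hv0 : v ≠ 0) (hv1 : v ≠ 1) :
    (1 - (1 - (1 - v)⁻¹)⁻¹)⁻¹ = v := by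
  have ha : (1:F) - v ≠ 0 := sub_ne_zero.mpr (fun h => hv1 h.symm)
  have e1 : (1:F) - (1-v)⁻¹ = -v * (1-v)⁻¹ := by field_simp; ring
  have e2 : ((-v) * ((1:F)-v)⁻¹)⁻¹ = 1 - v⁻¹ :=
    inv_eq_of_mul_eq_one_left (by field_simp; ring)
  rw [e1, e2, show (1:F) - (1 - v⁻¹) = v⁻¹ by ring, inv_inv]

private lemma g_fix1 {F : Type*} [Field F] {v : F} (hv1 : v ≠ 1)
    (h : (1-v)⁻¹ = v) : v ^ 2 - v + 1 = 0 := by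
  have ha : (1:F) - v ≠ 0 := sub_ne_zero.mpr (fun h => hv1 h.symm)
  have h' : v * (1 - v) = 1 := by
    nth_rewrite 1 [← h]; exact inv_mul_cancel₀ ha
  linear_combination -h'

private lemma g_fix2 {F : Type*} [Field F] {v : F} (hv0 : v ≠ 0) (hv1 : v ≠ 1)
    (h : (1 - (1 - v)⁻¹)⁻¹ = v) : v ^ 2 - v + 1 = 0 := by
  have ha : (1:F) - v ≠ 0 := sub_ne_zero.mpr (fun h => hv1 h.symm)
  have e1 : (1:F) - (1-v)⁻¹ = -v * (1-v)⁻¹ := by field_simp; ring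
  have e2 : ((-v) * ((1:F)-v)⁻¹)⁻¹ = 1 - v⁻¹ :=
    inv_eq_of_mul_eq_one_left (by field_simp; ring)
  rw [e1, e2] at h
  have hinv : v⁻¹ = 1 - v := by linear_combination -h
  have h' : v * (1 - v) = 1 := by rw [← hinv]; exact mul_inv_cancel₀ hv0
  linear_combination -h'

private lemma sigma_fix {F : Type*} [Field F] {d : ℕ} (hd : 0 < d) (h2F : (2:F) ≠ 0)
    {v : F} (hv : v ^ d + (1 - v) ^ d = 1) (hfix : 1 - v = v) :
    (2:F) ^ (d-1) = 1 := by
  have h2v : v * (2:F) = 1 := by linear_combination -hfix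
  have hv2 : v = 2⁻¹ := eq_inv_of_mul_eq_one_left h2v
  rw [hfix, hv2, inv_pow] at hv
  have h2dn : (2:F) ^ d ≠ 0 := pow_ne_zero _ h2F
  have h2d : (2:F) ^ d = 2 := by
    field_simp at hv
    linear_combination -hv
  have hde : d = (d - 1) + 1 := by omega
  rw [hde, pow_succ] at h2d
  have : (2:F) ^ (d-1) * 2 = 1 * 2 := by linear_combination h2d
  exact mul_right_cancel₀ h2F this

theorem stmt_11 (F : Type*) [Field F] [Fintype F] (p : ℕ) [CharP F p] (hp : 5 ≤ p)
    (hF : Fintype.card F % 3 = 2)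
    (d : ℕ) (hd : 0 < d) (hcop : Nat.Coprime d (Fintype.card F - 1))
    (h2 : (2 : F) ^ (d - 1) ≠ 1) :
    {v : F | v ^ d + (1 - v) ^ d = 1}.ncard % 6 = 2 := by
  classical
  have hprime : p.Prime := CharP.char_is_prime F p
  have h2F : (2 : F) ≠ 0 := by
    intro h
    have h' : p ∣ 2 := (CharP.cast_eq_zero_iff F p 2).mp (by exact_mod_cast h)
    have := Nat.le_of_dvd (by norm_num) h'
    omega
  have h3F : (3 : F) ≠ 0 := by
    intro h
    have h' : p ∣ 3 := (CharP.cast_eq_zero_iff F p 3).mp (by exact_mod_cast h)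
    have := Nat.le_of_dvd (by norm_num) h'
    omega
  obtain ⟨n, hn⟩ := FiniteField.card F p
  have hoddq : Odd (Fintype.card F) := by
    rw [hn.2]
    exact (hprime.odd_of_ne_two (by omega)).pow
  have hcard2 : 2 ≤ Fintype.card F := Fintype.one_lt_card
  have hoddd : Odd d := by
    rcases Nat.even_or_odd d with he | ho
    · exfalso
      have h2d : 2 ∣ d := he.two_dvd
      have h2q : 2 ∣ Fintype.card F - 1 := by
        obtain ⟨k, hk⟩ := hoddq
        omega
      have := Nat.dvd_gcd h2d h2q
      rw [hcop] at this
      omega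
    · exact ho
  have hroot : ∀ v : F, v ^ 2 - v + 1 ≠ 0 := by
    intro v hv
    have hvne : v ≠ -1 := by
      intro h; rw [h] at hv
      apply h3F; linear_combination hv
    have hw3 : (-v) ^ 3 = 1 := by linear_combination (-(v:F) - 1) * hv
    have hwne0 : (-v : F) ≠ 0 := by
      intro h; rw [h] at hw3; simp at hw3
    have hwne1 : (-v : F) ≠ 1 := by
      intro h
      exact hvne (by linear_combination -h)
    set u : Fˣ := Units.mk0 (-v) hwne0 with hudef
    have hu3 : u ^ 3 = 1 := by
      ext; push_cast [hudef]; exact hw3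
    have hu1 : u ≠ 1 := by
      intro h
      apply hwne1
      have := congrArg (Units.val) h
      simpa [hudef] using this
    have hord : orderOf u = 3 := orderOf_eq_prime hu3 hu1
    have hdvd : orderOf u ∣ Nat.card Fˣ := orderOf_dvd_natCard u
    rw [hord, Nat.card_units, Nat.card_eq_fintype_card] at hdvd
    omega
  -- the solution set as a finset
  set s : Finset F := Finset.univ.filter (fun v => v ^ d + (1 - v) ^ d = 1) with hs
  have hmem : ∀ v : F, v ∈ s ↔ v ^ d + (1 - v) ^ d = 1 := by
    intro v; simp [hs]
  have h0s : (0 : F) ∈ s := by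
    rw [hmem]; simp [zero_pow hd.ne']
  have h1s : (1 : F) ∈ s := by
    rw [hmem]; simp [zero_pow hd.ne']
  set t : Finset F := s \ {0, 1} with ht
  have htmem : ∀ v : F, v ∈ t ↔ (v ^ d + (1 - v) ^ d = 1 ∧ v ≠ 0 ∧ v ≠ 1) := by
    intro v
    simp only [ht, Finset.mem_sdiff, hmem, Finset.mem_insert, Finset.mem_singleton]
    tauto
  -- divisibility by 2 via v ↦ 1 - v
  have hdvd2 : 2 ∣ t.card := by
    apply dvd_two_aux (fun v : F => 1 - v) t
    · intro v hv
      rw [htmem] at hv ⊢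
      obtain ⟨heq, hv0, hv1⟩ := hv
      refine ⟨?_, fun h => hv1 (by linear_combination -h), fun h => hv0 (by linear_combination -h)⟩
      rw [show (1:F) - (1 - v) = v by ring]
      linear_combination heq
    · intro v _; ring
    · intro v hv hfix
      rw [htmem] at hv
      exact h2 (sigma_fix hd h2F hv.1 hfix)
  -- divisibility by 3 via v ↦ (1 - v)⁻¹
  have hdvd3 : 3 ∣ t.card := by
    apply dvd_three_aux (fun v : F => (1 - v)⁻¹) t
    · intro v hv
      rw [htmem] at hv ⊢
      obtain ⟨heq, hv0, hv1⟩ := hv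
      have ha : (1:F) - v ≠ 0 := sub_ne_zero.mpr (fun h => hv1 h.symm)
      refine ⟨g_stable hoddd heq hv1, inv_ne_zero ha, ?_⟩
      intro h
      apply hv0
      have : (1:F) - v = 1 := by rw [← inv_inv ((1:F) - v), h, inv_one]
      linear_combination -this
    · intro v hv
      rw [htmem] at hv
      exact g_cube hv.2.1 hv.2.2
    · intro v hv hfix
      rw [htmem] at hv
      exact hroot v (g_fix1 hv.2.2 hfix)
    · intro v hv hfix
      rw [htmem] at hv
      exact hroot v (g_fix2 hv.2.1 hv.2.2 hfix)
  have hdvd6 : 6 ∣ t.card := by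
    obtain ⟨a, haa⟩ := hdvd2
    obtain ⟨b, hbb⟩ := hdvd3
    omega
  -- counting
  have hsub : ({0, 1} : Finset F) ⊆ s := by
    intro x hx
    simp only [Finset.mem_insert, Finset.mem_singleton] at hx
    rcases hx with rfl | rfl
    exacts [h0s, h1s]
  have hpair : ({0, 1} : Finset F).card = 2 := Finset.card_pair (zero_ne_one)
  have hcards : t.card = s.card - 2 := by rw [ht, Finset.card_sdiff_of_subset hsub, hpair]
  have hle : 2 ≤ s.card := hpair ▸ Finset.card_le_card hsub
  have hset : {v : F | v ^ d + (1 - v) ^ d = 1} = ↑s := by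
    ext v; simp [hs]
  rw [hset, Set.ncard_coe_finset]
  omega
end

section
/- Let F be a finite field and d a positive integer with gcd(d, |F*|) = 1, and suppose x ∈ F \ {0,1} satisfies x^d + (1-x)^d = 1. Then each of 1-x, 1/x, 1/(1-x), (x-1)/x, and x/(x-1) also lies in F \ {0,1} and satisfies the same equation t^d + (1-t)^d = 1. -/
theorem stmt_12 (F : Type*) [Field F] [Fintype F] (d : ℕ) (hd : 0 < d)
    (hcop : Nat.Coprime d (Fintype.card F - 1))
    (x : F) (hx0 : x ≠ 0) (hx1 : x ≠ 1) (hx : x ^ d + (1 - x) ^ d = 1) :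
    ∀ t ∈ ({1 - x, 1 / x, 1 / (1 - x), (x - 1) / x, x / (x - 1)} : Set F),
      t ≠ 0 ∧ t ≠ 1 ∧ t ^ d + (1 - t) ^ d = 1 := by
  have hneg : (-1 : F) ^ d = -1 := by
    rcases Nat.even_or_odd d with he | ho
    · have h2c : ¬ 2 ∣ (Fintype.card F - 1) := by
        intro h
        have := Nat.eq_one_of_dvd_coprimes hcop he.two_dvd h
        omega
      have hcard : Fintype.card F % 2 = 0 := by
        have h1 : 1 ≤ Fintype.card F := Fintype.card_pos
        omega
      have hchar : ringChar F = 2 := FiniteField.even_card_iff_char_two.mpr hcard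
      rw [neg_one_eq_one_iff.mpr hchar, one_pow]
    · exact ho.neg_one_pow
  have hsx : (1 : F) - x ≠ 0 := sub_ne_zero.mpr (Ne.symm hx1)
  have hxs : x - 1 ≠ 0 := sub_ne_zero.mpr hx1
  have h1 : (1 - x) ^ d = 1 - x ^ d := by linear_combination hx
  have h2 : (x - 1) ^ d = x ^ d - 1 := by
    calc (x - 1) ^ d = ((-1) * (1 - x)) ^ d := by ring_nf
    _ = (-1) ^ d * (1 - x) ^ d := mul_pow _ _ _
    _ = x ^ d - 1 := by rw [hneg, h1]; ring
  intro t ht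
  simp only [Set.mem_insert_iff, Set.mem_singleton_iff] at ht
  rcases ht with rfl | rfl | rfl | rfl | rfl
  · refine ⟨hsx, by simpa using hx0, ?_⟩
    rw [show (1 : F) - (1 - x) = x by ring, add_comm]; exact hx
  · refine ⟨one_div_ne_zero hx0, ?_, ?_⟩
    · intro h; rw [div_eq_one_iff_eq hx0] at h; exact hx1 h.symm
    · rw [show (1 : F) - 1 / x = (x - 1) / x by field_simp, div_pow, div_pow,
        ← add_div, h2]
      field_simp
      ring
  · refine ⟨one_div_ne_zero hsx, ?_, ?_⟩
    · intro h; rw [div_eq_one_iff_eq hsx] at h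
      exact hx0 (by linear_combination h)
    · have hsxd : (1 : F) - x ^ d ≠ 0 := h1 ▸ pow_ne_zero d hsx
      rw [show (1 : F) - 1 / (1 - x) = (-x) / (1 - x) by field_simp; ring, div_pow, div_pow,
        ← add_div, neg_pow, hneg, h1, one_pow,
        show (1 : F) + -1 * x ^ d = 1 - x ^ d by ring, div_self hsxd]
  · refine ⟨div_ne_zero hxs hx0, ?_, ?_⟩
    · intro h; rw [div_eq_one_iff_eq hx0] at h
      exact one_ne_zero (by linear_combination -h : (1 : F) = 0)
    · rw [show (1 : F) - (x - 1) / x = 1 / x by field_simp; ring, div_pow, div_pow,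
        ← add_div, h2]
      field_simp
      ring
  · refine ⟨div_ne_zero hx0 hxs, ?_, ?_⟩
    · intro h; rw [div_eq_one_iff_eq hxs] at h
      exact one_ne_zero (by linear_combination h : (1 : F) = 0)
    · have hxsd : x ^ d - 1 ≠ 0 := h2 ▸ pow_ne_zero d hxs
      rw [show (1 : F) - x / (x - 1) = (-1) / (x - 1) by field_simp; ring, div_pow, div_pow,
        ← add_div, hneg, h2,
        show x ^ d + -1 = x ^ d - 1 by ring, div_self hxsd]
end

section
/- Suppose the Weil sum W_{F,d} takes exactly three values on F*, which are 0, a, and b with a, b nonzero integers. Then for every positive integer k ≥ 3, Σ_{u∈F*} W_{F,d}(u)^k = (a+b)·Σ_{u∈F*} W_{F,d}(u)^{k-1} − ab·Σ_{u∈F*} W_{F,d}(u)^{k-2}, and consequently Σ_{u∈F*} W_{F,d}(u)^k = (q²(a^{k-1} − b^{k-1}) − q·ab·(a^{k-2} − b^{k-2}))/(a − b), where q = |F|. -/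
open Complex

open scoped Classical in
theorem stmt_13 (p : ℕ) [Fact p.Prime] (F : Type*) [Field F] [Fintype F]
    [Algebra (ZMod p) F] (d : ℕ) (hd : 0 < d)
    (hcop : Nat.Coprime d (Fintype.card F - 1))
    (q : ℕ) (hq : q = Fintype.card F)
    (a b : ℤ) (ha : a ≠ 0) (hb : b ≠ 0) (hab : a ≠ b)
    (hvals : (Set.range fun u : Fˣ => weilSum p F d u) = {0, (a : ℂ), (b : ℂ)})
    (h1 : ∑ u : Fˣ, weilSum p F d u = (q : ℂ))
    (h2 : ∑ u : Fˣ, (weilSum p F d u) ^ 2 = (q : ℂ) ^ 2) :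
    ∀ k : ℕ, 3 ≤ k →
      (∑ u : Fˣ, (weilSum p F d u) ^ k =
        ((a : ℂ) + b) * ∑ u : Fˣ, (weilSum p F d u) ^ (k - 1)
          - (a : ℂ) * b * ∑ u : Fˣ, (weilSum p F d u) ^ (k - 2)) ∧
      (∑ u : Fˣ, (weilSum p F d u) ^ k =
        ((q : ℂ) ^ 2 * ((a : ℂ) ^ (k - 1) - (b : ℂ) ^ (k - 1))
          - (q : ℂ) * a * b * ((a : ℂ) ^ (k - 2) - (b : ℂ) ^ (k - 2))) / ((a : ℂ) - b)) := by
  have hab' : (a : ℂ) ≠ (b : ℂ) := by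
    intro h; exact hab (by exact_mod_cast h)
  have hsub : (a : ℂ) - b ≠ 0 := sub_ne_zero.mpr hab'
  have hcube : ∀ u : Fˣ, weilSum p F d u ^ 3 =
      ((a : ℂ) + b) * weilSum p F d u ^ 2 - (a : ℂ) * b * weilSum p F d u := by
    intro u
    have hmem : weilSum p F d (u : F) ∈ ({0, (a : ℂ), (b : ℂ)} : Set ℂ) := by
      rw [← hvals]; exact ⟨u, rfl⟩
    rcases hmem with h | h | h <;> rw [h] <;> ring
  have hrec : ∀ m : ℕ, ∑ u : Fˣ, weilSum p F d u ^ (m + 3) =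
      ((a : ℂ) + b) * ∑ u : Fˣ, weilSum p F d u ^ (m + 2)
        - (a : ℂ) * b * ∑ u : Fˣ, weilSum p F d u ^ (m + 1) := by
    intro m
    rw [Finset.mul_sum, Finset.mul_sum, ← Finset.sum_sub_distrib]
    refine Finset.sum_congr rfl fun u _ => ?_
    calc weilSum p F d u ^ (m + 3) = weilSum p F d u ^ m * weilSum p F d u ^ 3 := by ring
      _ = weilSum p F d u ^ m *
          (((a : ℂ) + b) * weilSum p F d u ^ 2 - (a : ℂ) * b * weilSum p F d u) := by
          rw [hcube u]
      _ = _ := by ring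
  set f : ℕ → ℂ := fun n =>
    ((q : ℂ) ^ 2 * ((a : ℂ) ^ (n + 1) - (b : ℂ) ^ (n + 1))
      - (q : ℂ) * a * b * ((a : ℂ) ^ n - (b : ℂ) ^ n)) / ((a : ℂ) - b) with hf
  have key : ∀ n : ℕ, (∑ u : Fˣ, weilSum p F d u ^ (n + 2) = f n) ∧
      (∑ u : Fˣ, weilSum p F d u ^ (n + 3) = f (n + 1)) := by
    intro n
    induction n with
    | zero =>
      have hS2 : ∑ u : Fˣ, weilSum p F d u ^ (0 + 2) = f 0 := by
        simp only [hf, zero_add]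
        rw [h2]
        field_simp
        ring
      refine ⟨hS2, ?_⟩
      rw [show (0 + 3 : ℕ) = 0 + 3 from rfl, hrec 0]
      simp only [zero_add] at hS2 ⊢
      rw [hS2, show (∑ u : Fˣ, weilSum p F d u ^ 1) = (q : ℂ) by simpa using h1]
      simp only [hf]
      field_simp
      try ring
    | succ n ih =>
      refine ⟨ih.2, ?_⟩
      have := hrec (n + 1)
      rw [show n + 1 + 3 = n + 4 from rfl, show n + 1 + 2 = n + 3 from rfl] at this
      rw [show n + 1 + 3 = n + 4 from rfl, this,
        show n + 1 + 1 = n + 2 from rfl, ih.1, ih.2]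
      simp only [hf]
      field_simp
      ring
  intro k hk
  obtain ⟨m, rfl⟩ : ∃ m, k = m + 3 := ⟨k - 3, by omega⟩
  have e1 : m + 3 - 1 = m + 2 := by omega
  have e2 : m + 3 - 2 = m + 1 := by omega
  rw [e1, e2]
  refine ⟨hrec m, ?_⟩
  have hfin := (key (m + 1)).1
  rw [show m + 1 + 2 = m + 3 from by omega] at hfin
  rw [hfin]
end

section
/- Suppose W_{F,d} takes exactly three values 0, a, b on F* with a, b nonzero integers, where F has order q. Then V₁ = a + b − ab/q, where V₁ = |{v ∈ F : v^d + (1-v)^d = 1}|; in particular q divides ab. -/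
open Complex
open scoped Classical

section Aux

variable (p : ℕ) [Fact p.Prime] (F : Type*) [Field F] [Fintype F] [Algebra (ZMod p) F]

/-- The canonical additive character, as an `AddChar`. -/
noncomputable def chiF : AddChar F ℂ :=
  (ZMod.stdAddChar (N := p)).compAddMonoidHom (Algebra.trace (ZMod p) F).toAddMonoidHom

lemma psi_eq_chiF (x : F) : psi p F x = chiF p F x := by
  rw [psi, chiF, AddChar.compAddMonoidHom_apply, LinearMap.toAddMonoidHom_coe,
    ZMod.stdAddChar_apply, ZMod.toCircle_apply]

lemma charP_F : CharP F p :=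
  charP_of_injective_algebraMap (algebraMap (ZMod p) F).injective p

lemma chiF_ne_one : chiF p F ≠ 1 := by
  rw [AddChar.ne_one_iff]
  have : ∃ x : F, Algebra.trace (ZMod p) F x ≠ 0 := by
    haveI := charP_F p F
    have hring : ringChar F = p := ringChar.eq F p
    subst hring
    obtain ⟨b, hb⟩ := FiniteField.trace_to_zmod_nondegenerate F (one_ne_zero (α := F))
    exact ⟨1 * b, hb⟩
  obtain ⟨x, hx⟩ := this
  refine ⟨x, ?_⟩
  rw [chiF, AddChar.compAddMonoidHom_apply, LinearMap.toAddMonoidHom_coe]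
  intro h
  apply hx
  have := ZMod.injective_stdAddChar (N := p)
  have h0 : ZMod.stdAddChar (N := p) 0 = 1 := AddChar.map_zero_eq_one _
  exact this (h.trans h0.symm)

lemma chiF_prim : (chiF p F).IsPrimitive :=
  AddChar.IsPrimitive.of_ne_one (chiF_ne_one p F)

lemma sum_chiF_mul (x : F) :
    ∑ u : F, chiF p F (u * x) = if x = 0 then (Fintype.card F : ℂ) else 0 := by
  classical
  rw [AddChar.sum_mulShift x (chiF_prim p F)]
  split <;> simp

lemma sum_chiF : ∑ x : F, chiF p F x = 0 :=
  AddChar.sum_eq_zero_of_ne_one (chiF_ne_one p F)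

variable {d : ℕ}

lemma pow_d_bij (hd : 0 < d) (hcop : Nat.Coprime d (Fintype.card F - 1)) :
    Function.Bijective (fun x : F => x ^ d) := by
  rw [Fintype.bijective_iff_injective_and_card]
  refine ⟨fun x y hxy => ?_, rfl⟩
  simp only at hxy
  rcases eq_or_ne y 0 with rfl | hy
  · rw [zero_pow hd.ne'] at hxy
    exact pow_eq_zero_iff hd.ne' |>.mp hxy
  · rcases eq_or_ne x 0 with rfl | hx
    · rw [zero_pow hd.ne'] at hxy
      exact ((pow_eq_zero_iff hd.ne' |>.mp hxy.symm).symm ▸ rfl)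
    · set t : Fˣ := Units.mk0 (x * y⁻¹) (by
        exact mul_ne_zero hx (inv_ne_zero hy))
      have ht : t ^ d = 1 := by
        apply Units.ext
        rw [Units.val_pow_eq_pow_val, Units.val_one, Units.val_mk0,
          mul_pow, hxy, inv_pow, mul_inv_cancel₀ (pow_ne_zero d hy)]
      have h1 : orderOf t ∣ d := orderOf_dvd_of_pow_eq_one ht
      have h2 : orderOf t ∣ Fintype.card F - 1 := by
        rw [← Fintype.card_units]
        exact orderOf_dvd_card
      have : orderOf t ∣ 1 := hcop ▸ Nat.dvd_gcd h1 h2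
      have ht1 : t = 1 := orderOf_eq_one_iff.mp (Nat.dvd_one.mp this)
      have hxy1 : x * y⁻¹ = 1 := by simpa [t] using congrArg Units.val ht1
      field_simp at hxy1
      exact hxy1

include p in
lemma neg_pow_d (hcop : Nat.Coprime d (Fintype.card F - 1)) (x : F) :
    (-x) ^ d = -(x ^ d) := by
  haveI hchar := charP_F p F
  rcases eq_or_ne p 2 with h2 | h2
  · subst h2
    haveI : CharP F 2 := hchar
    rw [CharTwo.neg_eq, CharTwo.neg_eq]
  · have hodd : Odd d := by
      obtain ⟨n, hp, hcard⟩ := FiniteField.card F p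
      have hqodd : Odd (Fintype.card F) := by
        rw [hcard]
        exact (hp.odd_of_ne_two h2).pow
      have heven : Even (Fintype.card F - 1) := Nat.Odd.sub_odd hqodd odd_one
      rcases Nat.even_or_odd d with hde | hdo
      · exfalso
        have : (2 : ℕ) ∣ 1 := hcop ▸ Nat.dvd_gcd hde.two_dvd heven.two_dvd
        omega
      · exact hdo
    exact hodd.neg_pow x

end Aux

section Moments

variable (p : ℕ) [Fact p.Prime] (F : Type*) [Field F] [Fintype F] [Algebra (ZMod p) F] {d : ℕ}

lemma weilSum_zero (hd : 0 < d) (hcop : Nat.Coprime d (Fintype.card F - 1)) :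
    weilSum p F d 0 = 0 := by
  rw [weilSum]
  simp only [psi_eq_chiF, zero_mul, add_zero]
  rw [Fintype.sum_bijective _ (pow_d_bij F hd hcop) _ _ (fun x => rfl)]
  exact sum_chiF p F

lemma moment1 (hd : 0 < d) :
    ∑ u : F, weilSum p F d u = (Fintype.card F : ℂ) := by
  simp only [weilSum, psi_eq_chiF]
  rw [Finset.sum_comm]
  have h1 : ∀ x : F, ∑ u : F, chiF p F (x ^ d + u * x)
      = chiF p F (x ^ d) * (if x = 0 then (Fintype.card F : ℂ) else 0) := by
    intro x
    simp only [AddChar.map_add_eq_mul]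
    rw [← Finset.mul_sum, sum_chiF_mul]
  rw [Finset.sum_congr rfl fun x _ => h1 x]
  rw [Finset.sum_eq_single 0]
  · rw [if_pos rfl, zero_pow hd.ne', AddChar.map_zero_eq_one, one_mul]
  · intro x _ hx
    rw [if_neg hx, mul_zero]
  · intro h
    exact absurd (Finset.mem_univ 0) h

lemma moment2 (hd : 0 < d) (hcop : Nat.Coprime d (Fintype.card F - 1)) :
    ∑ u : F, (weilSum p F d u) ^ 2 = (Fintype.card F : ℂ) ^ 2 := by
  have hW : ∀ u : F, (weilSum p F d u) ^ 2
      = ∑ x : F, ∑ y : F, chiF p F (x ^ d + y ^ d) * chiF p F (u * (x + y)) := by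
    intro u
    rw [weilSum, sq, Finset.sum_mul_sum]
    refine Finset.sum_congr rfl fun x _ => Finset.sum_congr rfl fun y _ => ?_
    rw [psi_eq_chiF, psi_eq_chiF, ← AddChar.map_add_eq_mul, ← AddChar.map_add_eq_mul]
    congr 1
    ring
  calc ∑ u : F, (weilSum p F d u) ^ 2
      = ∑ u : F, ∑ x : F, ∑ y : F, chiF p F (x ^ d + y ^ d) * chiF p F (u * (x + y)) :=
        Finset.sum_congr rfl fun u _ => hW u
    _ = ∑ x : F, ∑ y : F, chiF p F (x ^ d + y ^ d)
          * (if x + y = 0 then (Fintype.card F : ℂ) else 0) := by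
        rw [Finset.sum_comm]
        refine Finset.sum_congr rfl fun x _ => ?_
        rw [Finset.sum_comm]
        refine Finset.sum_congr rfl fun y _ => ?_
        rw [← Finset.mul_sum, sum_chiF_mul]
    _ = ∑ x : F, chiF p F (x ^ d + (-x) ^ d) * (Fintype.card F : ℂ) := by
        refine Finset.sum_congr rfl fun x _ => ?_
        rw [Finset.sum_eq_single (-x)]
        · rw [if_pos (by ring)]
        · intro y _ hy
          rw [if_neg (fun h => hy (by linear_combination h)), mul_zero]
        · intro h
          exact absurd (Finset.mem_univ _) h
    _ = (Fintype.card F : ℂ) ^ 2 := by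
        have hz : ∀ x : F, x ^ d + (-x) ^ d = 0 := fun x => by
          rw [neg_pow_d p F hcop]; ring
        simp only [hz, AddChar.map_zero_eq_one, one_mul, Finset.sum_const,
          Finset.card_univ, nsmul_eq_mul]
        rw [sq]

lemma Ssum (hd : 0 < d) (hcop : Nat.Coprime d (Fintype.card F - 1)) :
    ∑ x : F, ∑ y : F, chiF p F (x ^ d + y ^ d - (x + y) ^ d)
      = (Fintype.card F : ℂ)
        * ((Finset.univ.filter (fun v : F => v ^ d + (1 - v) ^ d = 1)).card : ℂ) := by
  have step1 : ∀ x : F, ∑ y : F, chiF p F (x ^ d + y ^ d - (x + y) ^ d)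
      = ∑ s : F, chiF p F (x ^ d + (s - x) ^ d - s ^ d) := by
    intro x
    refine Fintype.sum_equiv (Equiv.addLeft x) _ _ (fun y => ?_)
    simp only [Equiv.coe_addLeft]
    rw [add_sub_cancel_left]
  simp only [step1]
  rw [Finset.sum_comm]
  rw [← Finset.sum_erase_add _ _ (Finset.mem_univ (0 : F))]
  have h0 : ∑ x : F, chiF p F (x ^ d + ((0 : F) - x) ^ d - (0 : F) ^ d)
      = (Fintype.card F : ℂ) := by
    have hz : ∀ x : F, x ^ d + ((0 : F) - x) ^ d - (0 : F) ^ d = 0 := by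
      intro x
      rw [zero_sub, neg_pow_d p F hcop, zero_pow hd.ne']
      ring
    simp only [hz, AddChar.map_zero_eq_one, Finset.sum_const, Finset.card_univ,
      nsmul_eq_mul, mul_one]
  have hs : ∀ s : F, s ≠ 0 → ∑ x : F, chiF p F (x ^ d + (s - x) ^ d - s ^ d)
      = ∑ v : F, chiF p F (s ^ d * (v ^ d + (1 - v) ^ d - 1)) := by
    intro s hsne
    refine (Fintype.sum_equiv (Equiv.mulLeft₀ s hsne) _ _ (fun v => ?_)).symm
    simp only [Equiv.mulLeft₀_apply]
    congr 1
    have h1 : s - s * v = s * (1 - v) := by ring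
    rw [h1, mul_pow, mul_pow]
    ring
  rw [Finset.sum_congr rfl (fun s hsmem => hs s (Finset.mem_erase.mp hsmem).1)]
  rw [Finset.sum_comm, h0]
  have hinner : ∀ v : F, ∑ s ∈ Finset.univ.erase (0 : F),
        chiF p F (s ^ d * (v ^ d + (1 - v) ^ d - 1))
      = (if v ^ d + (1 - v) ^ d - 1 = 0 then (Fintype.card F : ℂ) else 0) - 1 := by
    intro v
    rw [Finset.sum_erase_eq_sub (Finset.mem_univ (0 : F))]
    congr 1
    · rw [Fintype.sum_bijective _ (pow_d_bij F hd hcop) _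
        (fun s => chiF p F (s * (v ^ d + (1 - v) ^ d - 1))) (fun s => rfl)]
      exact sum_chiF_mul p F _
    · rw [zero_pow hd.ne', zero_mul, AddChar.map_zero_eq_one]
  rw [Finset.sum_congr rfl (fun v _ => hinner v)]
  rw [Finset.sum_sub_distrib, Finset.sum_const, Finset.card_univ, nsmul_eq_mul, mul_one]
  simp only [sub_eq_zero]
  rw [← Finset.sum_filter, Finset.sum_const, nsmul_eq_mul]
  ring

lemma moment3 (hd : 0 < d) (hcop : Nat.Coprime d (Fintype.card F - 1)) :
    ∑ u : F, (weilSum p F d u) ^ 3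
      = (Fintype.card F : ℂ) ^ 2
        * ((Finset.univ.filter (fun v : F => v ^ d + (1 - v) ^ d = 1)).card : ℂ) := by
  have hW : ∀ u : F, (weilSum p F d u) ^ 3
      = ∑ x : F, ∑ y : F, ∑ z : F,
          chiF p F (x ^ d + y ^ d + z ^ d) * chiF p F (u * (x + y + z)) := by
    intro u
    rw [weilSum, pow_succ, sq, Finset.sum_mul_sum, Finset.sum_mul]
    refine Finset.sum_congr rfl fun x _ => ?_
    rw [Finset.sum_mul]
    refine Finset.sum_congr rfl fun y _ => ?_
    rw [Finset.mul_sum]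
    refine Finset.sum_congr rfl fun z _ => ?_
    rw [psi_eq_chiF, psi_eq_chiF, psi_eq_chiF, ← AddChar.map_add_eq_mul,
      ← AddChar.map_add_eq_mul, ← AddChar.map_add_eq_mul]
    congr 1
    ring
  calc ∑ u : F, (weilSum p F d u) ^ 3
      = ∑ u : F, ∑ x : F, ∑ y : F, ∑ z : F,
          chiF p F (x ^ d + y ^ d + z ^ d) * chiF p F (u * (x + y + z)) :=
        Finset.sum_congr rfl fun u _ => hW u
    _ = ∑ x : F, ∑ y : F, ∑ z : F, chiF p F (x ^ d + y ^ d + z ^ d)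
          * (if x + y + z = 0 then (Fintype.card F : ℂ) else 0) := by
        rw [Finset.sum_comm]
        refine Finset.sum_congr rfl fun x _ => ?_
        rw [Finset.sum_comm]
        refine Finset.sum_congr rfl fun y _ => ?_
        rw [Finset.sum_comm]
        refine Finset.sum_congr rfl fun z _ => ?_
        rw [← Finset.mul_sum, sum_chiF_mul]
    _ = ∑ x : F, ∑ y : F, chiF p F (x ^ d + y ^ d - (x + y) ^ d)
          * (Fintype.card F : ℂ) := by
        refine Finset.sum_congr rfl fun x _ => Finset.sum_congr rfl fun y _ => ?_
        rw [Finset.sum_eq_single (-(x + y))]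
        · rw [if_pos (by ring), neg_pow_d p F hcop, ← sub_eq_add_neg]
        · intro z _ hz
          rw [if_neg (fun h => hz (by linear_combination h)), mul_zero]
        · intro h
          exact absurd (Finset.mem_univ _) h
    _ = (Fintype.card F : ℂ) ^ 2
          * ((Finset.univ.filter (fun v : F => v ^ d + (1 - v) ^ d = 1)).card : ℂ) := by
        simp only [← Finset.sum_mul]
        rw [Ssum p F hd hcop]
        ring

lemma sum_F_eq (g : F → ℂ) : ∑ u : F, g u = g 0 + ∑ u : Fˣ, g u := by
  rw [← Finset.sum_erase_add Finset.univ g (Finset.mem_univ (0 : F)), add_comm]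
  congr 1
  rw [Finset.sum_subtype (p := fun x : F => x ≠ 0) (Finset.univ.erase 0)
    (fun x => by simp) g]
  exact (Fintype.sum_equiv unitsEquivNeZero _ _ (fun u => rfl)).symm

end Moments

lemma tri_sum {ι : Type*} [Fintype ι] (f : ι → ℂ) (a b : ℂ) (ha : a ≠ 0) (hb : b ≠ 0)
    (hab : a ≠ b) (h : ∀ u, f u = 0 ∨ f u = a ∨ f u = b) (k : ℕ) (hk : k ≠ 0) :
    ∑ u, (f u) ^ k = ((Finset.univ.filter (fun u => f u = a)).card : ℂ) * a ^ k
      + ((Finset.univ.filter (fun u => f u = b)).card : ℂ) * b ^ k := by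
  have key : ∀ u, (f u) ^ k = (if f u = a then a ^ k else if f u = b then b ^ k else 0) := by
    intro u
    rcases h u with h1 | h1 | h1
    · rw [h1, zero_pow hk, if_neg (fun hh => ha hh.symm), if_neg (fun hh => hb hh.symm)]
    · rw [h1, if_pos rfl]
    · rw [h1, if_neg (fun hh => hab hh.symm), if_pos rfl]
  simp only [key]
  rw [Finset.sum_ite, Finset.sum_const, Finset.sum_ite, Finset.sum_const,
    Finset.sum_const_zero, add_zero]
  have hfil : ((Finset.univ.filter (fun u => ¬ f u = a)).filter (fun u => f u = b))
      = Finset.univ.filter (fun u => f u = b) := by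
    ext u
    simp only [Finset.mem_filter, Finset.mem_univ, true_and]
    exact ⟨fun hh => hh.2, fun hh => ⟨fun h1 => hab (h1.symm.trans hh), hh⟩⟩
  rw [hfil, nsmul_eq_mul, nsmul_eq_mul]

open scoped Classical in
theorem stmt_15 (p : ℕ) [Fact p.Prime] (F : Type*) [Field F] [Fintype F]
    [Algebra (ZMod p) F] (d : ℕ) (hd : 0 < d)
    (hcop : Nat.Coprime d (Fintype.card F - 1))
    (q : ℕ) (hq : q = Fintype.card F)
    (a b : ℤ) (ha : a ≠ 0) (hb : b ≠ 0) (hab : a ≠ b)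
    (hvals : (Set.range fun u : Fˣ => weilSum p F d u) = {0, (a : ℂ), (b : ℂ)}) :
    (q : ℤ) ∣ a * b ∧
      ({v : F | v ^ d + (1 - v) ^ d = 1}.ncard : ℤ) = a + b - a * b / (q : ℤ) := by
  have hq1 : 0 < q := hq ▸ Fintype.card_pos
  have hqC : (Fintype.card F : ℂ) = (q : ℂ) := by rw [hq]
  have w0 : weilSum p F d 0 = 0 := weilSum_zero p F hd hcop
  -- sums over units
  have u1 : ∑ u : Fˣ, weilSum p F d u = (q : ℂ) := by
    have m1 := moment1 p F (d := d) hd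
    rw [sum_F_eq F (fun u => weilSum p F d u)] at m1
    simp only [w0, zero_add] at m1
    rw [m1, hqC]
  have u2 : ∑ u : Fˣ, (weilSum p F d u) ^ 2 = (q : ℂ) ^ 2 := by
    have m2 := moment2 p F hd hcop
    rw [sum_F_eq F (fun u => (weilSum p F d u) ^ 2)] at m2
    simp only [w0, zero_pow (two_ne_zero), zero_add] at m2
    rw [m2, hqC]
  set N : ℕ := (Finset.univ.filter (fun v : F => v ^ d + (1 - v) ^ d = 1)).card with hN
  have u3 : ∑ u : Fˣ, (weilSum p F d u) ^ 3 = (q : ℂ) ^ 2 * (N : ℂ) := by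
    have m3 := moment3 p F hd hcop
    rw [sum_F_eq F (fun u => (weilSum p F d u) ^ 3)] at m3
    simp only [w0, zero_pow (three_ne_zero), zero_add] at m3
    rw [m3, hqC]
  -- membership
  have hmem : ∀ u : Fˣ, weilSum p F d u = 0 ∨ weilSum p F d u = (a : ℂ)
      ∨ weilSum p F d u = (b : ℂ) := by
    intro u
    have : weilSum p F d (u : F) ∈ ({0, (a : ℂ), (b : ℂ)} : Set ℂ) := by
      rw [← hvals]
      exact Set.mem_range_self u
    simpa using this
  have haC : (a : ℂ) ≠ 0 := by exact_mod_cast ha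
  have hbC : (b : ℂ) ≠ 0 := by exact_mod_cast hb
  have habC : (a : ℂ) ≠ (b : ℂ) := by exact_mod_cast hab
  set A : ℕ := (Finset.univ.filter (fun u : Fˣ => weilSum p F d u = (a : ℂ))).card with hA
  set B : ℕ := (Finset.univ.filter (fun u : Fˣ => weilSum p F d u = (b : ℂ))).card with hB
  have t1 := tri_sum (fun u : Fˣ => weilSum p F d u) _ _ haC hbC habC hmem 1 one_ne_zero
  have t2 := tri_sum (fun u : Fˣ => weilSum p F d u) _ _ haC hbC habC hmem 2 two_ne_zero
  have t3 := tri_sum (fun u : Fˣ => weilSum p F d u) _ _ haC hbC habC hmem 3 three_ne_zero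
  simp only [pow_one] at t1
  rw [t1, ← hA, ← hB] at u1
  rw [t2, ← hA, ← hB] at u2
  rw [t3, ← hA, ← hB] at u3
  -- integer equations
  have e1 : (A : ℤ) * a + (B : ℤ) * b = (q : ℤ) := by exact_mod_cast u1
  have e2 : (A : ℤ) * a ^ 2 + (B : ℤ) * b ^ 2 = (q : ℤ) ^ 2 := by exact_mod_cast u2
  have e3 : (A : ℤ) * a ^ 3 + (B : ℤ) * b ^ 3 = (q : ℤ) ^ 2 * (N : ℤ) := by exact_mod_cast u3
  have hqZ : (q : ℤ) ≠ 0 := by exact_mod_cast hq1.ne'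
  have key : (q : ℤ) * ((q : ℤ) * (N : ℤ)) = (q : ℤ) * ((a + b) * (q : ℤ) - a * b) := by
    linear_combination (-1 : ℤ) * e3 + (a + b) * e2 - a * b * e1
  have key2 : (q : ℤ) * (N : ℤ) = (a + b) * (q : ℤ) - a * b := mul_left_cancel₀ hqZ key
  have hdvd : (q : ℤ) ∣ a * b := ⟨a + b - (N : ℤ), by linear_combination key2⟩
  refine ⟨hdvd, ?_⟩
  have hncard : ({v : F | v ^ d + (1 - v) ^ d = 1}.ncard : ℤ) = (N : ℤ) := by
    have : {v : F | v ^ d + (1 - v) ^ d = 1}.ncard = N := by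
      rw [Set.ncard_eq_toFinset_card', Set.toFinset_setOf]
    exact_mod_cast this
  rw [hncard]
  have hab2 : a * b = (q : ℤ) * (a + b - (N : ℤ)) := by linear_combination key2
  rw [hab2, Int.mul_ediv_cancel_left _ hqZ]
  ring
end
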